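/- arXiv:1705.06444 — 7 statements merged into one kernel-verified Lean document; each statement's English description precedes it below -/
import Mathlib

section
/- For every n ≥ 2 and every density matrix ρ on (ℂ²)^{⊗n} (a 2^n × 2^n positive semidefinite complex matrix of trace one), the maximum violation γ(ρ) of the Bell inequality, defined as the supremum of Tr(ρ·B̃_n) over all Bell operators B̃_n, satisfies γ(ρ) ≤ 2·√(u₁² + u₂²), where u₁² ≥ u₂² ≥ u₃² are the eigenvalues of the 3×3 real positive semidefinite matrix RᵀR built from the R-matrix of ρ. -/
open Matrix BigOperators ComplexOrder

noncomputable section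

/-- The three Pauli matrices σx, σy, σz as 2×2 complex matrices. -/
def σp : Fin 3 → Matrix (Fin 2) (Fin 2) ℂ
  | 0 => !![0, 1; 1, 0]
  | 1 => !![0, -Complex.I; Complex.I, 0]
  | 2 => !![1, 0; 0, -1]

/-- `a · σ` for a real 3-vector `a`. -/
def dotSigma (a : Fin 3 → ℝ) : Matrix (Fin 2) (Fin 2) ℂ :=
  ∑ i : Fin 3, (a i : ℂ) • σp i

/-- `a` is a unit vector in ℝ³. -/
def IsUnitVec (a : Fin 3 → ℝ) : Prop :=
  ∑ i : Fin 3, (a i) ^ 2 = 1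

/-- Kronecker product of `n` 2×2 matrices, acting on `(ℂ²)^{⊗n}`, with the
tensor factors indexed by `Fin n` and the basis of `(ℂ²)^{⊗n}` by `Fin n → Fin 2`. -/
def kron {n : ℕ} (A : Fin n → Matrix (Fin 2) (Fin 2) ℂ) :
    Matrix (Fin n → Fin 2) (Fin n → Fin 2) ℂ :=
  fun f g => ∏ i : Fin n, A i (f i) (g i)

/-- The Bell operator `B̃_n` on `n = m+1` qubits determined by the unit vectors
`a i`, `a' i` (with `a 0 = b`, `a' 0 = b'` and the pair of settings at the last site):
`B̃_n = (b·σ)⊗(a₂·σ)⊗⋯⊗(a_{n−1}·σ)⊗((a_n+a'_n)·σ)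
      + (b'·σ)⊗(a'₂·σ)⊗⋯⊗(a'_{n−1}·σ)⊗((a_n−a'_n)·σ)`. -/
def bellOp {m : ℕ} (a a' : Fin (m + 1) → Fin 3 → ℝ) :
    Matrix (Fin (m + 1) → Fin 2) (Fin (m + 1) → Fin 2) ℂ :=
  kron (fun i => if i = Fin.last m then dotSigma (a i + a' i) else dotSigma (a i)) +
  kron (fun i => if i = Fin.last m then dotSigma (a i - a' i) else dotSigma (a' i))

/-- The set of Bell expectation values `Tr(ρ·B̃_n)` over all Bell operators
(built from unit vectors); its supremum is the maximum violation `γ(ρ)`. -/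
def bellSet {m : ℕ} (ρ : Matrix (Fin (m + 1) → Fin 2) (Fin (m + 1) → Fin 2) ℂ) : Set ℝ :=
  {x | ∃ a a' : Fin (m + 1) → Fin 3 → ℝ,
      (∀ i, IsUnitVec (a i)) ∧ (∀ i, IsUnitVec (a' i)) ∧
      x = ((ρ * bellOp a a').trace).re}

/-- The R-matrix of a density matrix on `n = m+1` qubits:
`R_{I,i} = Tr(ρ·(σ_{i₁}⊗⋯⊗σ_{i_{n−1}}⊗σ_i))`. -/
def Rmat {m : ℕ} (ρ : Matrix (Fin (m + 1) → Fin 2) (Fin (m + 1) → Fin 2) ℂ) :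
    Matrix (Fin m → Fin 3) (Fin 3) ℝ :=
  fun I i => ((ρ * kron (fun k => σp ((Fin.snoc I i : Fin (m + 1) → Fin 3) k))).trace).re

/-- Outer product `|ψ⟩⟨ψ|`. -/
def outer {ι : Type*} (ψ : ι → ℂ) : Matrix ι ι ℂ :=
  fun f g => ψ f * (starRingEnd ℂ) (ψ g)

/-- Reduced density matrix of the last qubit (partial trace of `|ψ⟩⟨ψ|`
over the first `N` qubits). -/
def rhoA {N : ℕ} (ψ : (Fin (N + 1) → Fin 2) → ℂ) : Matrix (Fin 2) (Fin 2) ℂ :=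
  fun s t => ∑ g : Fin N → Fin 2, ψ (Fin.snoc g s) * (starRingEnd ℂ) (ψ (Fin.snoc g t))

/-- Concurrence of a pure state w.r.t. the bipartition (first `N` qubits | last qubit):
`C(ψ) = √(2(1 − Tr ρ_A²))`. -/
def concurrence {N : ℕ} (ψ : (Fin (N + 1) → Fin 2) → ℂ) : ℝ :=
  Real.sqrt (2 * (1 - ((rhoA ψ * rhoA ψ).trace).re))

/-- Bit flip on `Fin 2`. -/
def flip2 (b : Fin 2) : Fin 2 := if b = 0 then 1 else 0

/-- The paper's state `|ψ⟩ = |u⟩ ⊗ (λ₊|v⟩⊗|1⟩ + λ₋|ṽ⟩⊗|0⟩)` on `n = k+m+1` qubits,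
where `u` indexes a computational basis state of the first `k` qubits, `v` a basis
state of the next `m = α−1` qubits, `ṽ` its bitwise complement, and the last qubit
carries `|1⟩`, `|0⟩` (with `e₀ = (1,0)ᵀ`, `e₁ = (0,1)ᵀ`). -/
def psiState (k m : ℕ) (u : Fin k → Fin 2) (v : Fin m → Fin 2) (lp lm : ℝ) :
    (Fin (k + m + 1) → Fin 2) → ℂ :=
  fun f =>
    (if (fun i : Fin k => f (Fin.castLE (by omega) i)) = u then 1 else 0) *
      ((lp : ℂ) * (if (fun i : Fin m => f ⟨k + i.1, by omega⟩) = v then 1 else 0) *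
          (if f (Fin.last (k + m)) = 1 then 1 else 0) +
        (lm : ℂ) *
            (if (fun i : Fin m => f ⟨k + i.1, by omega⟩) = fun i => flip2 (v i) then 1 else 0) *
          (if f (Fin.last (k + m)) = 0 then 1 else 0))

/-- Von Neumann entropy `−Tr(ρ ln ρ)` of a Hermitian matrix, via its eigenvalues. -/
def vonNeumannEntropy {d : Type*} [Fintype d] [DecidableEq d] (ρ : Matrix d d ℂ)
    (h : ρ.IsHermitian) : ℝ :=
  -∑ i, h.eigenvalues i * Real.log (h.eigenvalues i)


/-!
Expanding each factor `x·σ` in the Pauli basis gives `Tr(ρ B̃_n) = ⟨c, R s⟩ + ⟨c', R d⟩`, where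
`s = a_n + a'_n`, `d = a_n - a'_n`, and `c, c'` are tensor products of unit vectors of `ℝ³`,
hence unit vectors of `ℝ^{3^{n-1}}`. By Cauchy–Schwarz this is at most `|R s| + |R d|`.
As `s ⊥ d` and `|s|² + |d|² = 4`, Cauchy–Schwarz in the plane bounds `|s| |R ŝ| + |d| |R d̂|` by
`2 √(|R ŝ|² + |R d̂|²)`, and by Ky Fan's inequality `|R ŝ|² + |R d̂|² = ŝᵀ(RᵀR)ŝ + d̂ᵀ(RᵀR)d̂` is
at most the sum of the two largest eigenvalues of `RᵀR`.
-/

section DotProduct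

variable {ι κ : Type*} [Fintype ι] [Fintype κ]

lemma dotProduct_self_nonneg (v : ι → ℝ) : 0 ≤ v ⬝ᵥ v := by
  simpa using dotProduct_self_star_nonneg v

/-- Only `≤ 1`: for `v = 0` the normalised vector `(√0)⁻¹ • 0` is `0`. -/
lemma dotProduct_smul_self_le_one (v : ι → ℝ) :
    (√(v ⬝ᵥ v))⁻¹ • v ⬝ᵥ (√(v ⬝ᵥ v))⁻¹ • v ≤ 1 := by
  rw [smul_dotProduct, dotProduct_smul, smul_smul, smul_eq_mul, ← sq, inv_pow,
    Real.sq_sqrt (dotProduct_self_nonneg v)]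
  exact inv_mul_le_one_of_le₀ le_rfl (dotProduct_self_nonneg v)

lemma sq_add_sq_le_one_of_dotProduct_eq_zero {y z : ι → ℝ}
    (hy : y ⬝ᵥ y ≤ 1) (hz : z ⬝ᵥ z ≤ 1) (hyz : y ⬝ᵥ z = 0) (j : ι) :
    y j ^ 2 + z j ^ 2 ≤ 1 := by
  set x := y j • y + z j • z
  have hxj : x j = y j ^ 2 + z j ^ 2 := by simp [x, sq]
  have hxx : x ⬝ᵥ x = y j ^ 2 * (y ⬝ᵥ y) + z j ^ 2 * (z ⬝ᵥ z) := by
    simp only [x, add_dotProduct, dotProduct_add, smul_dotProduct, dotProduct_smul, smul_eq_mul,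
      dotProduct_comm z y, hyz]
    ring
  have hxj_sq : x j ^ 2 ≤ x ⬝ᵥ x := by
    simpa only [dotProduct, sq] using
      Finset.single_le_sum (fun i _ => mul_self_nonneg (x i)) (Finset.mem_univ j)
  nlinarith [sq_nonneg (y j), sq_nonneg (z j)]

lemma dotProduct_mulVec_transpose_mul_self (R : Matrix κ ι ℝ) (v : ι → ℝ) :
    v ⬝ᵥ (Rᵀ * R) *ᵥ v = (R *ᵥ v) ⬝ᵥ (R *ᵥ v) := by
  rw [← Matrix.mulVec_mulVec, Matrix.dotProduct_mulVec, Matrix.vecMul_transpose]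

lemma sqrt_add_sqrt_le_of_dotProduct_eq_zero (R : Matrix κ ι ℝ) {K : ℝ}
    (hK : ∀ e f : ι → ℝ, e ⬝ᵥ e ≤ 1 → f ⬝ᵥ f ≤ 1 → e ⬝ᵥ f = 0 →
      (R *ᵥ e) ⬝ᵥ (R *ᵥ e) + (R *ᵥ f) ⬝ᵥ (R *ᵥ f) ≤ K)
    {s d : ι → ℝ} (hsd : s ⬝ᵥ d = 0) (hnorm : s ⬝ᵥ s + d ⬝ᵥ d = 4) :
    √((R *ᵥ s) ⬝ᵥ (R *ᵥ s)) + √((R *ᵥ d) ⬝ᵥ (R *ᵥ d)) ≤ 2 * √K := by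
  have hscale : ∀ v : ι → ℝ, √((R *ᵥ v) ⬝ᵥ (R *ᵥ v))
      = √(v ⬝ᵥ v) * √((R *ᵥ ((√(v ⬝ᵥ v))⁻¹ • v)) ⬝ᵥ (R *ᵥ ((√(v ⬝ᵥ v))⁻¹ • v))) := by
    intro v
    by_cases hv : v ⬝ᵥ v = 0
    · simp [dotProduct_self_eq_zero.1 hv]
    · rw [← Real.sqrt_mul (dotProduct_self_nonneg v), Matrix.mulVec_smul,
        smul_dotProduct, dotProduct_smul, smul_smul, smul_eq_mul, ← mul_assoc, ← sq, inv_pow,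
        Real.sq_sqrt (dotProduct_self_nonneg v), mul_inv_cancel₀ hv, one_mul]
  set e := (√(s ⬝ᵥ s))⁻¹ • s
  set f := (√(d ⬝ᵥ d))⁻¹ • d
  have hef : e ⬝ᵥ f = 0 := by simp [e, f, hsd]
  have hQ := hK e f (dotProduct_smul_self_le_one s) (dotProduct_smul_self_le_one d) hef
  have hQe := dotProduct_self_nonneg (R *ᵥ e)
  have hQf := dotProduct_self_nonneg (R *ᵥ f)
  have hs := Real.sq_sqrt (dotProduct_self_nonneg s)
  have hd := Real.sq_sqrt (dotProduct_self_nonneg d)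
  have hx := Real.sq_sqrt hQe
  have hy := Real.sq_sqrt hQf
  have hK' := Real.sq_sqrt (hQe.trans (le_add_of_nonneg_right hQf) |>.trans hQ)
  rw [hscale s, hscale d]
  refine le_of_pow_le_pow_left₀ two_ne_zero (by positivity) ?_
  -- Cauchy–Schwarz in the plane, with `√(s ⬝ᵥ s) ^ 2 + √(d ⬝ᵥ d) ^ 2 = 4`
  nlinarith [sq_nonneg (√(s ⬝ᵥ s) * √((R *ᵥ f) ⬝ᵥ (R *ᵥ f))
    - √(d ⬝ᵥ d) * √((R *ᵥ e) ⬝ᵥ (R *ᵥ e)))]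

variable [DecidableEq ι] {M : Matrix ι ι ℝ}

lemma Matrix.IsHermitian.transpose_eigenvectorUnitary_mulVec_dotProduct (hM : M.IsHermitian)
    (v w : ι → ℝ) :
    ((hM.eigenvectorUnitary : Matrix ι ι ℝ)ᵀ *ᵥ v) ⬝ᵥ
      ((hM.eigenvectorUnitary : Matrix ι ι ℝ)ᵀ *ᵥ w) = v ⬝ᵥ w := by
  have hU : (hM.eigenvectorUnitary : Matrix ι ι ℝ) * (hM.eigenvectorUnitary : Matrix ι ι ℝ)ᵀ
      = 1 := by
    simpa [Matrix.star_eq_conjTranspose] using Unitary.coe_mul_star_self hM.eigenvectorUnitary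
  rw [Matrix.dotProduct_mulVec, Matrix.vecMul_transpose, Matrix.mulVec_mulVec, hU,
    Matrix.one_mulVec]

lemma Matrix.IsHermitian.dotProduct_mulVec_eq_sum_eigenvalues (hM : M.IsHermitian)
    (w : ι → ℝ) :
    w ⬝ᵥ M *ᵥ w = ∑ j, hM.eigenvalues j *
      ((hM.eigenvectorUnitary : Matrix ι ι ℝ)ᵀ *ᵥ w) j ^ 2 := by
  set U := (hM.eigenvectorUnitary : Matrix ι ι ℝ)
  have hM' : M = U * Matrix.diagonal hM.eigenvalues * Uᵀ := by
    conv_lhs => rw [hM.spectral_theorem, Unitary.conjStarAlgAut_apply]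
    simp [U, Matrix.star_eq_conjTranspose]
  conv_lhs => rw [hM']
  rw [← Matrix.mulVec_mulVec, ← Matrix.mulVec_mulVec, Matrix.dotProduct_mulVec,
    ← Matrix.mulVec_transpose]
  simp only [dotProduct, Matrix.mulVec_diagonal]
  exact Finset.sum_congr rfl fun j _ => by ring

/-- Ky Fan's inequality for two vectors: in the eigenbasis the left side is `∑ λⱼ pⱼ` with
weights `0 ≤ pⱼ ≤ 1` summing to at most `2`. -/
lemma Matrix.PosSemidef.dotProduct_mulVec_add_le (hM : M.PosSemidef) {μ : ℝ} (hμ : 0 ≤ μ)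
    (hμ_le : ∀ j, μ ≤ hM.isHermitian.eigenvalues j) {e f : ι → ℝ}
    (he : e ⬝ᵥ e ≤ 1) (hf : f ⬝ᵥ f ≤ 1) (hef : e ⬝ᵥ f = 0) :
    e ⬝ᵥ M *ᵥ e + f ⬝ᵥ M *ᵥ f ≤ M.trace - (Fintype.card ι - 2) * μ := by
  set U := (hM.isHermitian.eigenvectorUnitary : Matrix ι ι ℝ)
  set lam := hM.isHermitian.eigenvalues
  set p : ι → ℝ := fun j => (Uᵀ *ᵥ e) j ^ 2 + (Uᵀ *ᵥ f) j ^ 2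
  have hp_le : ∀ j, p j ≤ 1 := by
    intro j
    have := hM.isHermitian.transpose_eigenvectorUnitary_mulVec_dotProduct
    exact sq_add_sq_le_one_of_dotProduct_eq_zero ((this e e).trans_le he)
      ((this f f).trans_le hf) ((this e f).trans hef) j
  have hp_sum : ∑ j, p j ≤ 2 := by
    have := hM.isHermitian.transpose_eigenvectorUnitary_mulVec_dotProduct
    simp only [p, Finset.sum_add_distrib, sq]
    rw [← dotProduct, ← dotProduct, this, this]
    linarith
  have htrace : M.trace = ∑ j, lam j := by simpa using hM.isHermitian.trace_eq_sum_eigenvalues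
  calc e ⬝ᵥ M *ᵥ e + f ⬝ᵥ M *ᵥ f = ∑ j, lam j - ∑ j, lam j * (1 - p j) := by
        rw [hM.isHermitian.dotProduct_mulVec_eq_sum_eigenvalues,
          hM.isHermitian.dotProduct_mulVec_eq_sum_eigenvalues,
          ← Finset.sum_add_distrib, ← Finset.sum_sub_distrib]
        exact Finset.sum_congr rfl fun j _ => by simp only [p]; ring
    _ ≤ ∑ j, lam j - ∑ j, μ * (1 - p j) := by
        gcongr with j
        · exact sub_nonneg.2 (hp_le j)
        · exact hμ_le j
    _ ≤ M.trace - (Fintype.card ι - 2) * μ := by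
        rw [htrace, ← Finset.mul_sum, Finset.sum_sub_distrib]
        simp only [Finset.sum_const, Finset.card_univ, nsmul_eq_mul, mul_one]
        nlinarith

end DotProduct

lemma Matrix.PosSemidef.dotProduct_mulVec_add_le_of_sorted {M : Matrix (Fin 3) (Fin 3) ℝ}
    (hM : M.PosSemidef) (u : Fin 3 → ℝ)
    (hu : ∃ σ : Equiv.Perm (Fin 3), ∀ i, u i = hM.isHermitian.eigenvalues (σ i))
    (hsort : u 1 ≤ u 0 ∧ u 2 ≤ u 1) {e f : Fin 3 → ℝ}
    (he : e ⬝ᵥ e ≤ 1) (hf : f ⬝ᵥ f ≤ 1) (hef : e ⬝ᵥ f = 0) :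
    e ⬝ᵥ M *ᵥ e + f ⬝ᵥ M *ᵥ f ≤ u 0 + u 1 := by
  obtain ⟨σ, hσ⟩ := hu
  have hu_eig : ∀ j, hM.isHermitian.eigenvalues j = u (σ.symm j) := fun j => by simp [hσ]
  have hu2_le : ∀ j, u 2 ≤ hM.isHermitian.eigenvalues j := fun j => by
    rw [hu_eig]
    generalize σ.symm j = i
    fin_cases i <;> simp <;> linarith
  have htrace : M.trace = u 0 + u 1 + u 2 := by
    rw [← Fin.sum_univ_three, ← Equiv.sum_comp σ.symm, ← Finset.sum_congr rfl fun j _ => hu_eig j]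
    simpa using hM.isHermitian.trace_eq_sum_eigenvalues
  have h := hM.dotProduct_mulVec_add_le (hσ 2 ▸ hM.eigenvalues_nonneg (σ 2)) hu2_le he hf hef
  rw [htrace] at h
  norm_num at h
  linarith

lemma IsUnitVec.dotProduct_add_sub {a b : Fin 3 → ℝ} (ha : IsUnitVec a) (hb : IsUnitVec b) :
    (a + b) ⬝ᵥ (a - b) = 0 ∧ (a + b) ⬝ᵥ (a + b) + (a - b) ⬝ᵥ (a - b) = 4 := by
  simp only [IsUnitVec, sq] at ha hb
  simp only [dotProduct, Pi.add_apply, Pi.sub_apply, Fin.sum_univ_three] at ha hb ⊢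
  constructor <;> linarith
lemma sum_prod_sq_eq_one {m : ℕ} {a : Fin m → Fin 3 → ℝ} (ha : ∀ k, IsUnitVec (a k)) :
    ∑ I : Fin m → Fin 3, (∏ k, a k (I k)) ^ 2 = 1 := by
  simp_rw [← Finset.prod_pow]
  rw [← Fintype.prod_sum fun k j => a k j ^ 2]
  exact Finset.prod_eq_one fun k _ => ha k

lemma sum_prod_mul_le_sqrt {m : ℕ} {a : Fin m → Fin 3 → ℝ} (ha : ∀ k, IsUnitVec (a k))
    (t : (Fin m → Fin 3) → ℝ) : ∑ I, (∏ k, a k (I k)) * t I ≤ √(t ⬝ᵥ t) := by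
  have h := Real.sum_mul_le_sqrt_mul_sqrt Finset.univ (fun I => ∏ k, a k (I k)) t
  rw [sum_prod_sq_eq_one ha, Real.sqrt_one, one_mul] at h
  simpa only [dotProduct, sq] using h

lemma kron_dotSigma_eq_sum {n : ℕ} (W : Fin n → Fin 3 → ℝ) :
    kron (fun i => dotSigma (W i))
      = ∑ J : Fin n → Fin 3, ((∏ i, W i (J i) : ℝ) : ℂ) • kron (fun i => σp (J i)) := by
  ext g f
  simp only [kron, dotSigma, Matrix.sum_apply, Matrix.smul_apply, smul_eq_mul]
  rw [Fintype.prod_sum fun i j => (W i j : ℂ) * σp j (g i) (f i)]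
  refine Finset.sum_congr rfl fun J _ => ?_
  rw [Finset.prod_mul_distrib]
  push_cast
  ring

lemma re_trace_mul_kron_dotSigma {n : ℕ} (ρ : Matrix (Fin n → Fin 2) (Fin n → Fin 2) ℂ)
    (W : Fin n → Fin 3 → ℝ) :
    ((ρ * kron fun i => dotSigma (W i)).trace).re
      = ∑ J : Fin n → Fin 3, (∏ i, W i (J i)) * ((ρ * kron fun i => σp (J i)).trace).re := by
  simp only [kron_dotSigma_eq_sum, Matrix.mul_sum, Matrix.trace_sum, Complex.re_sum,
    Matrix.mul_smul, Matrix.trace_smul, smul_eq_mul, Complex.re_ofReal_mul]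

lemma re_trace_mul_kron_dotSigma_eq_sum_Rmat {m : ℕ}
    (ρ : Matrix (Fin (m + 1) → Fin 2) (Fin (m + 1) → Fin 2) ℂ) (W : Fin (m + 1) → Fin 3 → ℝ) :
    ((ρ * kron fun i => dotSigma (W i)).trace).re
      = ∑ I : Fin m → Fin 3, (∏ k, W k.castSucc (I k)) * (Rmat ρ *ᵥ W (Fin.last m)) I := by
  rw [re_trace_mul_kron_dotSigma, ← (Fin.snocEquiv fun _ => Fin 3).sum_comp,
    Fintype.sum_prod_type, Finset.sum_comm]
  refine Finset.sum_congr rfl fun I _ => ?_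
  simp only [Fin.snocEquiv_apply, Fin.prod_univ_castSucc, Fin.snoc_castSucc, Fin.snoc_last,
    Matrix.mulVec, dotProduct, Finset.mul_sum]
  exact Finset.sum_congr rfl fun j _ => by rw [Rmat]; ring

lemma re_trace_mul_bellOp {m : ℕ} (ρ : Matrix (Fin (m + 1) → Fin 2) (Fin (m + 1) → Fin 2) ℂ)
    (a a' : Fin (m + 1) → Fin 3 → ℝ) :
    ((ρ * bellOp a a').trace).re
      = ∑ I : Fin m → Fin 3, (∏ k, a k.castSucc (I k)) *
          (Rmat ρ *ᵥ (a (Fin.last m) + a' (Fin.last m))) I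
        + ∑ I : Fin m → Fin 3, (∏ k, a' k.castSucc (I k)) *
          (Rmat ρ *ᵥ (a (Fin.last m) - a' (Fin.last m))) I := by
  simp only [bellOp, ← apply_ite dotSigma, mul_add, Matrix.trace_add, Complex.add_re,
    re_trace_mul_kron_dotSigma_eq_sum_Rmat, Fin.castSucc_ne_last, if_false, if_true]

theorem bell_violation_upper_bound_general {m : ℕ}
    (ρ : Matrix (Fin (m + 1) → Fin 2) (Fin (m + 1) → Fin 2) ℂ)
    (hH : ((Rmat ρ)ᵀ * Rmat ρ).IsHermitian)
    (u : Fin 3 → ℝ)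
    (hu : ∃ e : Equiv.Perm (Fin 3), ∀ i, u i = hH.eigenvalues (e i))
    (hsort : u 1 ≤ u 0 ∧ u 2 ≤ u 1) :
    (∀ x ∈ bellSet ρ, x ≤ 2 * Real.sqrt (u 0 + u 1)) ∧
      sSup (bellSet ρ) ≤ 2 * Real.sqrt (u 0 + u 1) := by
  have hPSD : ((Rmat ρ)ᵀ * Rmat ρ).PosSemidef := by
    simpa using Matrix.posSemidef_conjTranspose_mul_self (Rmat ρ)
  have hKyFan : ∀ e f : Fin 3 → ℝ, e ⬝ᵥ e ≤ 1 → f ⬝ᵥ f ≤ 1 → e ⬝ᵥ f = 0 →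
      (Rmat ρ *ᵥ e) ⬝ᵥ (Rmat ρ *ᵥ e) + (Rmat ρ *ᵥ f) ⬝ᵥ (Rmat ρ *ᵥ f) ≤ u 0 + u 1 := by
    intro e f he hf hef
    simpa only [dotProduct_mulVec_transpose_mul_self] using
      hPSD.dotProduct_mulVec_add_le_of_sorted u hu hsort he hf hef
  have hbound : ∀ x ∈ bellSet ρ, x ≤ 2 * √(u 0 + u 1) := by
    rintro x ⟨a, a', ha, ha', rfl⟩
    obtain ⟨hsd, hnorm⟩ := (ha (Fin.last m)).dotProduct_add_sub (ha' (Fin.last m))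
    rw [re_trace_mul_bellOp]
    exact (add_le_add (sum_prod_mul_le_sqrt (fun _ => ha _) _)
      (sum_prod_mul_le_sqrt (fun _ => ha' _) _)).trans
      (sqrt_add_sqrt_le_of_dotProduct_eq_zero _ hKyFan hsd hnorm)
  exact ⟨hbound, Real.sSup_le hbound (by positivity)⟩

/-- For every `n = m+1 ≥ 2` and every density matrix `ρ` on `(ℂ²)^{⊗n}`,
the maximum violation `γ(ρ) = sSup (bellSet ρ)` of the Bell inequality satisfies
`γ(ρ) ≤ 2√(u₁² + u₂²)`, where `u 0 ≥ u 1 ≥ u 2` are the eigenvalues (`uᵢ²`) of `RᵀR`. -/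
theorem bell_violation_upper_bound {m : ℕ} (hm : 1 ≤ m)
    (ρ : Matrix (Fin (m + 1) → Fin 2) (Fin (m + 1) → Fin 2) ℂ)
    (hpos : ρ.PosSemidef) (htr : ρ.trace = 1)
    (hH : ((Rmat ρ)ᵀ * Rmat ρ).IsHermitian)
    (u : Fin 3 → ℝ)
    (hu : ∃ e : Equiv.Perm (Fin 3), ∀ i, u i = hH.eigenvalues (e i))
    (hsort : u 1 ≤ u 0 ∧ u 2 ≤ u 1) :
    (∀ x ∈ bellSet ρ, x ≤ 2 * Real.sqrt (u 0 + u 1)) ∧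
      sSup (bellSet ρ) ≤ 2 * Real.sqrt (u 0 + u 1) :=
  bell_violation_upper_bound_general ρ hH u hu hsort
end
end

section
/- For n = 2 and every density matrix ρ on ℂ²⊗ℂ², the maximum violation γ(ρ) of the Bell inequality, defined as the supremum of Tr(ρ·B̃₂) over all Bell operators B̃₂, is exactly γ(ρ) = 2·√(u₁² + u₂²), where u₁² ≥ u₂² are the two largest eigenvalues of the 3×3 real matrix RᵀR built from the R-matrix of ρ. -/
open Matrix BigOperators ComplexOrder

noncomputable section

/-!
Let `R j i = Tr(ρ (σ_j ⊗ σ_i))`. By bilinearity `Tr(ρ B̃₂) = ⟪b, R (a + a')⟫ + ⟪b', R (a - a')⟫`,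
and for unit `a, a'` the vectors `a ± a'` are orthogonal with `‖a + a'‖² + ‖a - a'‖² = 4`.
Cauchy–Schwarz, first in `b, b'` and then in `ℝ²` after normalising `a ± a'` to `e, f`, bounds
the value by `2 √(‖R e‖² + ‖R f‖²)`. Ky Fan's maximum principle for `RᵀR` gives
`‖R e‖² + ‖R f‖² ≤ u 0 + u 1`: in an eigenbasis `w` of `RᵀR` the left side is
`∑ₖ u k (⟪w k, e⟫² + ⟪w k, f⟫²)`, whose weights lie in `[0, 1]` by Bessel's inequality and sum
to `2`. The bound is attained with `a ± a'` along the two top eigenvectors.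
-/

open scoped InnerProductSpace

namespace Matrix

variable {m n : Type*} [Fintype m] [Fintype n] [DecidableEq m] [DecidableEq n]

lemma norm_toEuclideanLin_sq (R : Matrix m n ℝ) (x : EuclideanSpace ℝ n) :
    ‖toEuclideanLin R x‖ ^ 2 = ⟪x, toEuclideanLin (Rᵀ * R) x⟫_ℝ := by
  have hadj : toEuclideanLin (Rᵀ * R) x = (toEuclideanLin R).adjoint (toEuclideanLin R x) := by
    rw [← toEuclideanLin_conjTranspose_eq_adjoint, conjTranspose_eq_transpose_of_trivial]
    ext1
    simp [toLpLin_apply, mulVec_mulVec]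
  rw [hadj, LinearMap.adjoint_inner_right, real_inner_self_eq_norm_sq]

lemma IsHermitian.inner_toEuclideanLin_self {A : Matrix n n ℝ} (hA : A.IsHermitian)
    (x : EuclideanSpace ℝ n) :
    ⟪x, toEuclideanLin A x⟫_ℝ = ∑ i, hA.eigenvalues i * ⟪hA.eigenvectorBasis i, x⟫_ℝ ^ 2 := by
  rw [← hA.eigenvectorBasis.sum_inner_mul_inner]
  refine Finset.sum_congr rfl fun i _ => ?_
  have hAv : toEuclideanLin A (hA.eigenvectorBasis i) =
      hA.eigenvalues i • hA.eigenvectorBasis i := by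
    ext1
    simp [hA.mulVec_eigenvectorBasis]
  rw [← (isSymmetric_toEuclideanLin_iff.mpr hA) _ x, hAv, real_inner_smul_left, real_inner_comm]
  ring

end Matrix

lemma exists_sq_add_sq_eq_one_mul_add_mul_eq_sqrt (p q : ℝ) :
    ∃ c s : ℝ, c ^ 2 + s ^ 2 = 1 ∧ c * p + s * q = √(p ^ 2 + q ^ 2) := by
  rcases eq_or_lt_of_le (add_nonneg (sq_nonneg p) (sq_nonneg q)) with h | h
  · refine ⟨1, 0, by norm_num, ?_⟩
    rw [← h, Real.sqrt_zero]
    nlinarith [sq_nonneg p, sq_nonneg q]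
  · refine ⟨p / √(p ^ 2 + q ^ 2), q / √(p ^ 2 + q ^ 2), ?_, ?_⟩
    · rw [div_pow, div_pow, ← add_div, Real.sq_sqrt h.le, div_self h.ne']
    · field_simp
      rw [Real.sq_sqrt h.le]

lemma exists_norm_eq_one_inner_eq_norm {F : Type*} [NormedAddCommGroup F]
    [InnerProductSpace ℝ F] [Nontrivial F] (z : F) : ∃ b : F, ‖b‖ = 1 ∧ ⟪b, z⟫_ℝ = ‖z‖ := by
  rcases eq_or_ne z 0 with rfl | hz
  · obtain ⟨b, hb⟩ := exists_norm_eq F zero_le_one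
    exact ⟨b, hb, by simp⟩
  · refine ⟨(‖z‖⁻¹ : ℝ) • z, by simp [norm_smul, hz], ?_⟩
    rw [real_inner_smul_left, real_inner_self_eq_norm_sq]
    field_simp

def chshValues {E F : Type*} [NormedAddCommGroup E] [InnerProductSpace ℝ E]
    [NormedAddCommGroup F] [InnerProductSpace ℝ F] (T : E →ₗ[ℝ] F) : Set ℝ :=
  {r | ∃ (b b' : F) (a a' : E), ‖b‖ = 1 ∧ ‖b'‖ = 1 ∧ ‖a‖ = 1 ∧ ‖a'‖ = 1 ∧
    r = ⟪b, T (a + a')⟫_ℝ + ⟪b', T (a - a')⟫_ℝ}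

section KyFan

variable {E F : Type*} [NormedAddCommGroup E] [InnerProductSpace ℝ E]
  [NormedAddCommGroup F] [InnerProductSpace ℝ F]
  {T : E →ₗ[ℝ] F} {w : OrthonormalBasis (Fin 3) ℝ E} {u : Fin 3 → ℝ}

lemma norm_sq_apply_basis (hT : ∀ x, ‖T x‖ ^ 2 = ∑ k, u k * ⟪w k, x⟫_ℝ ^ 2) (k : Fin 3) :
    ‖T (w k)‖ ^ 2 = u k := by
  simp [hT, orthonormal_iff_ite.mp w.orthonormal]

lemma norm_sq_apply_le (hT : ∀ x, ‖T x‖ ^ 2 = ∑ k, u k * ⟪w k, x⟫_ℝ ^ 2)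
    (h10 : u 1 ≤ u 0) (h21 : u 2 ≤ u 1) (x : E) : ‖T x‖ ^ 2 ≤ u 0 * ‖x‖ ^ 2 := by
  rw [hT, ← w.sum_sq_inner_right, Fin.sum_univ_three, Fin.sum_univ_three]
  linear_combination mul_nonneg (sub_nonneg.2 h10) (sq_nonneg ⟪w 1, x⟫_ℝ) +
    mul_nonneg (sub_nonneg.2 (h21.trans h10)) (sq_nonneg ⟪w 2, x⟫_ℝ)

lemma norm_sq_add_norm_sq_le (hT : ∀ x, ‖T x‖ ^ 2 = ∑ k, u k * ⟪w k, x⟫_ℝ ^ 2)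
    (h10 : u 1 ≤ u 0) (h21 : u 2 ≤ u 1) {e f : E} (he : ‖e‖ = 1) (hf : ‖f‖ = 1)
    (hef : ⟪e, f⟫_ℝ = 0) : ‖T e‖ ^ 2 + ‖T f‖ ^ 2 ≤ u 0 + u 1 := by
  have bessel (k : Fin 3) : ⟪w k, e⟫_ℝ ^ 2 + ⟪w k, f⟫_ℝ ^ 2 ≤ 1 := by
    have hef' : Orthonormal ℝ ![e, f] := by simp [he, hf, hef]
    simpa [Fin.sum_univ_two, real_inner_comm, sq_abs] using
      hef'.sum_inner_products_le (w k) (s := Finset.univ)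
  have parseval_e := w.sum_sq_inner_right e
  have parseval_f := w.sum_sq_inner_right f
  rw [he, one_pow] at parseval_e
  rw [hf, one_pow] at parseval_f
  rw [hT, hT]
  simp only [Fin.sum_univ_three] at parseval_e parseval_f ⊢
  linear_combination mul_nonneg (sub_nonneg.2 (h21.trans h10)) (sub_nonneg.2 (bessel 0)) +
    mul_nonneg (sub_nonneg.2 h21) (sub_nonneg.2 (bessel 1)) + u 2 * (parseval_e + parseval_f)

lemma norm_apply_le (hT : ∀ x, ‖T x‖ ^ 2 = ∑ k, u k * ⟪w k, x⟫_ℝ ^ 2)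
    (h10 : u 1 ≤ u 0) (h21 : u 2 ≤ u 1) (x : E) : ‖T x‖ ≤ ‖x‖ * √(u 0 + u 1) := by
  have hu1 : 0 ≤ u 1 := norm_sq_apply_basis hT 1 ▸ sq_nonneg _
  rw [← Real.sqrt_sq (norm_nonneg (T x)), ← Real.sqrt_sq (norm_nonneg x),
    ← Real.sqrt_mul (sq_nonneg _)]
  exact Real.sqrt_le_sqrt (by nlinarith [norm_sq_apply_le hT h10 h21 x, sq_nonneg ‖x‖])

lemma norm_apply_add_norm_apply_le (hT : ∀ x, ‖T x‖ ^ 2 = ∑ k, u k * ⟪w k, x⟫_ℝ ^ 2)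
    (h10 : u 1 ≤ u 0) (h21 : u 2 ≤ u 1) {x y : E} (hxy : ⟪x, y⟫_ℝ = 0) :
    ‖T x‖ + ‖T y‖ ≤ √(‖x‖ ^ 2 + ‖y‖ ^ 2) * √(u 0 + u 1) := by
  rcases eq_or_ne x 0 with rfl | hx
  · simpa using norm_apply_le hT h10 h21 y
  rcases eq_or_ne y 0 with rfl | hy
  · simpa using norm_apply_le hT h10 h21 x
  set e := (‖x‖⁻¹ : ℝ) • x
  set f := (‖y‖⁻¹ : ℝ) • y
  have hTx : ‖T x‖ = ‖x‖ * ‖T e‖ := by simp [e, norm_smul, hx]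
  have hTy : ‖T y‖ = ‖y‖ * ‖T f‖ := by simp [f, norm_smul, hy]
  have hef : ⟪e, f⟫_ℝ = 0 := by simp [e, f, real_inner_smul_left, real_inner_smul_right, hxy]
  have kyFan : ‖T e‖ ^ 2 + ‖T f‖ ^ 2 ≤ u 0 + u 1 :=
    norm_sq_add_norm_sq_le hT h10 h21 (by simp [e, norm_smul, hx]) (by simp [f, norm_smul, hy]) hef
  calc ‖T x‖ + ‖T y‖ = ‖x‖ * ‖T e‖ + ‖y‖ * ‖T f‖ := by rw [hTx, hTy]
    _ ≤ √(‖x‖ ^ 2 + ‖y‖ ^ 2) * √(‖T e‖ ^ 2 + ‖T f‖ ^ 2) := by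
      simpa [Fin.sum_univ_two] using
        Real.sum_mul_le_sqrt_mul_sqrt Finset.univ ![‖x‖, ‖y‖] ![‖T e‖, ‖T f‖]
    _ ≤ √(‖x‖ ^ 2 + ‖y‖ ^ 2) * √(u 0 + u 1) :=
      mul_le_mul_of_nonneg_left (Real.sqrt_le_sqrt kyFan) (Real.sqrt_nonneg _)

lemma two_mul_sqrt_mem_upperBounds_chshValues (hT : ∀ x, ‖T x‖ ^ 2 = ∑ k, u k * ⟪w k, x⟫_ℝ ^ 2)
    (h10 : u 1 ≤ u 0) (h21 : u 2 ≤ u 1) : 2 * √(u 0 + u 1) ∈ upperBounds (chshValues T) := by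
  rintro _ ⟨b, b', a, a', hb, hb', ha, ha', rfl⟩
  have horth : ⟪a + a', a - a'⟫_ℝ = 0 := (real_inner_add_sub_eq_zero_iff a a').2 (ha.trans ha'.symm)
  have hnorm : ‖a + a'‖ ^ 2 + ‖a - a'‖ ^ 2 = 2 ^ 2 := by
    have := parallelogram_law_with_norm ℝ a a'
    rw [ha, ha'] at this
    linear_combination this
  calc ⟪b, T (a + a')⟫_ℝ + ⟪b', T (a - a')⟫_ℝ ≤ ‖T (a + a')‖ + ‖T (a - a')‖ := by
        gcongr
        · simpa [hb] using real_inner_le_norm b (T (a + a'))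
        · simpa [hb'] using real_inner_le_norm b' (T (a - a'))
    _ ≤ √(‖a + a'‖ ^ 2 + ‖a - a'‖ ^ 2) * √(u 0 + u 1) :=
        norm_apply_add_norm_apply_le hT h10 h21 horth
    _ = 2 * √(u 0 + u 1) := by rw [hnorm, Real.sqrt_sq zero_le_two]

lemma two_mul_sqrt_mem_chshValues [Nontrivial F]
    (hT : ∀ x, ‖T x‖ ^ 2 = ∑ k, u k * ⟪w k, x⟫_ℝ ^ 2) : 2 * √(u 0 + u 1) ∈ chshValues T := by
  obtain ⟨c, s, hcs, hval⟩ := exists_sq_add_sq_eq_one_mul_add_mul_eq_sqrt ‖T (w 0)‖ ‖T (w 1)‖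
  rw [norm_sq_apply_basis hT, norm_sq_apply_basis hT] at hval
  obtain ⟨b, hb, hbT⟩ := exists_norm_eq_one_inner_eq_norm (T (w 0))
  obtain ⟨b', hb', hbT'⟩ := exists_norm_eq_one_inner_eq_norm (T (w 1))
  have hunit (s' : ℝ) (hs' : s' ^ 2 = s ^ 2) : ‖c • w 0 + s' • w 1‖ = 1 := by
    rw [← pow_eq_one_iff_of_nonneg (norm_nonneg _) two_ne_zero, norm_add_sq_real,
      real_inner_smul_left, real_inner_smul_right, w.orthonormal.2 (by decide : (0 : Fin 3) ≠ 1),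
      norm_smul, norm_smul, w.orthonormal.1, w.orthonormal.1]
    simpa [hs'] using hcs
  -- `a ± a'` point along `w 0` and `w 1` with weights `c, s`, and `b, b'` along their images.
  refine ⟨b, b', c • w 0 + s • w 1, c • w 0 + (-s) • w 1, hb, hb', hunit s rfl,
    hunit (-s) (by ring), ?_⟩
  rw [show c • w 0 + s • w 1 + (c • w 0 + (-s) • w 1) = (2 * c) • w 0 by module,
    show c • w 0 + s • w 1 - (c • w 0 + (-s) • w 1) = (2 * s) • w 1 by module,
    map_smul, map_smul, real_inner_smul_right, real_inner_smul_right, hbT, hbT', ← hval]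
  ring

theorem isGreatest_chshValues [Nontrivial F] (hT : ∀ x, ‖T x‖ ^ 2 = ∑ k, u k * ⟪w k, x⟫_ℝ ^ 2)
    (h10 : u 1 ≤ u 0) (h21 : u 2 ≤ u 1) : IsGreatest (chshValues T) (2 * √(u 0 + u 1)) :=
  ⟨two_mul_sqrt_mem_chshValues hT, two_mul_sqrt_mem_upperBounds_chshValues hT h10 h21⟩

end KyFan

lemma kron_two_apply (A : Fin 2 → Matrix (Fin 2) (Fin 2) ℂ) (f g : Fin 2 → Fin 2) :
    kron A f g = A 0 (f 0) (g 0) * A 1 (f 1) (g 1) :=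
  Fin.prod_univ_two _

lemma kron_dotSigma_dotSigma (b c : Fin 3 → ℝ) :
    kron ![dotSigma b, dotSigma c] = ∑ j, ∑ i, (b j * c i) • kron ![σp j, σp i] := by
  ext f g
  simp only [kron_two_apply, Matrix.sum_apply, Matrix.smul_apply, Matrix.cons_val_zero,
    Matrix.cons_val_one, dotSigma, Finset.sum_mul_sum]
  refine Finset.sum_congr rfl fun j _ => Finset.sum_congr rfl fun i _ => ?_
  simp only [smul_eq_mul, Complex.real_smul, Complex.ofReal_mul]
  ring

def Rmat3 (ρ : Matrix (Fin (1 + 1) → Fin 2) (Fin (1 + 1) → Fin 2) ℂ) :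
    Matrix (Fin 3) (Fin 3) ℝ :=
  (Rmat ρ).submatrix (Equiv.funUnique (Fin 1) (Fin 3)).symm id

lemma transpose_mul_self_Rmat3 (ρ : Matrix (Fin (1 + 1) → Fin 2) (Fin (1 + 1) → Fin 2) ℂ) :
    (Rmat3 ρ)ᵀ * Rmat3 ρ = (Rmat ρ)ᵀ * Rmat ρ := by
  rw [Rmat3, transpose_submatrix, submatrix_mul_equiv, submatrix_id_id]

lemma re_trace_mul_kron_pauli (ρ : Matrix (Fin (1 + 1) → Fin 2) (Fin (1 + 1) → Fin 2) ℂ)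
    (j i : Fin 3) : ((ρ * kron ![σp j, σp i]).trace).re = Rmat3 ρ j i := by
  have hpair : (fun k => σp ((Fin.snoc ((Equiv.funUnique (Fin 1) (Fin 3)).symm j) i :
      Fin 2 → Fin 3) k)) = ![σp j, σp i] := by
    funext k
    fin_cases k <;> rfl
  rw [Rmat3, submatrix_apply, id, Rmat, hpair]

lemma re_trace_mul_kron_dotSigma_s1 (ρ : Matrix (Fin (1 + 1) → Fin 2) (Fin (1 + 1) → Fin 2) ℂ)
    (b c : Fin 3 → ℝ) :
    ((ρ * kron ![dotSigma b, dotSigma c]).trace).re = b ⬝ᵥ (Rmat3 ρ *ᵥ c) := by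
  simp only [kron_dotSigma_dotSigma, Finset.mul_sum, Matrix.mul_smul, trace_sum, trace_smul,
    Complex.re_sum, Complex.smul_re, dotProduct, mulVec]
  exact Finset.sum_congr rfl fun j _ => Finset.sum_congr rfl fun i _ => by
    rw [re_trace_mul_kron_pauli]
    ring

lemma bellOp_two_qubits (a a' : Fin (1 + 1) → Fin 3 → ℝ) :
    bellOp a a' = kron ![dotSigma (a 0), dotSigma (a 1 + a' 1)]
      + kron ![dotSigma (a' 0), dotSigma (a 1 - a' 1)] := by
  unfold bellOp
  congr 1

lemma re_trace_mul_bellOp_s1 (ρ : Matrix (Fin (1 + 1) → Fin 2) (Fin (1 + 1) → Fin 2) ℂ)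
    (a a' : Fin (1 + 1) → Fin 3 → ℝ) :
    ((ρ * bellOp a a').trace).re =
      ⟪WithLp.toLp 2 (a 0),
        toEuclideanLin (Rmat3 ρ) (WithLp.toLp 2 (a 1) + WithLp.toLp 2 (a' 1))⟫_ℝ +
      ⟪WithLp.toLp 2 (a' 0),
        toEuclideanLin (Rmat3 ρ) (WithLp.toLp 2 (a 1) - WithLp.toLp 2 (a' 1))⟫_ℝ := by
  rw [bellOp_two_qubits, mul_add, trace_add, Complex.add_re, re_trace_mul_kron_dotSigma_s1,
    re_trace_mul_kron_dotSigma_s1, ← WithLp.toLp_add, ← WithLp.toLp_sub, toLpLin_toLp,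
    toLpLin_toLp, EuclideanSpace.inner_toLp_toLp, EuclideanSpace.inner_toLp_toLp]
  simp [dotProduct_comm]

lemma isUnitVec_iff_norm_toLp (a : Fin 3 → ℝ) : IsUnitVec a ↔ ‖WithLp.toLp 2 a‖ = 1 := by
  rw [IsUnitVec, EuclideanSpace.norm_eq, Real.sqrt_eq_one]
  simp [sq_abs]

lemma bellSet_eq_chshValues (ρ : Matrix (Fin (1 + 1) → Fin 2) (Fin (1 + 1) → Fin 2) ℂ) :
    bellSet ρ = chshValues (toEuclideanLin (Rmat3 ρ)) := by
  ext r
  simp only [bellSet, chshValues, Set.mem_ofPred_eq, re_trace_mul_bellOp_s1, isUnitVec_iff_norm_toLp]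
  constructor
  · rintro ⟨a, a', ha, ha', rfl⟩
    exact ⟨_, _, _, _, ha 0, ha' 0, ha 1, ha' 1, rfl⟩
  · rintro ⟨b, b', a, a', hb, hb', ha, ha', rfl⟩
    exact ⟨![WithLp.ofLp b, WithLp.ofLp a], ![WithLp.ofLp b', WithLp.ofLp a'],
      by simpa using ⟨hb, ha⟩, by simpa using ⟨hb', ha'⟩, by simp⟩

theorem bell_violation_two_qubits_general
    (ρ : Matrix (Fin (1 + 1) → Fin 2) (Fin (1 + 1) → Fin 2) ℂ)
    (hH : ((Rmat ρ)ᵀ * Rmat ρ).IsHermitian)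
    (u : Fin 3 → ℝ)
    (hu : ∃ e : Equiv.Perm (Fin 3), ∀ i, u i = hH.eigenvalues (e i))
    (hsort : u 1 ≤ u 0 ∧ u 2 ≤ u 1) :
    sSup (bellSet ρ) = 2 * Real.sqrt (u 0 + u 1) := by
  obtain ⟨p, hp⟩ := hu
  have hT (x : EuclideanSpace ℝ (Fin 3)) : ‖toEuclideanLin (Rmat3 ρ) x‖ ^ 2 =
      ∑ k, u k * ⟪hH.eigenvectorBasis.reindex p.symm k, x⟫_ℝ ^ 2 := by
    rw [norm_toEuclideanLin_sq, transpose_mul_self_Rmat3, hH.inner_toEuclideanLin_self,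
      ← Equiv.sum_comp p]
    simp [hp]
  rw [bellSet_eq_chshValues, (isGreatest_chshValues hT hsort.1 hsort.2).csSup_eq]

/-- For `n = 2` and every density matrix `ρ` on `ℂ²⊗ℂ²`, the maximum
violation `γ(ρ)` equals `2√(u₁² + u₂²)` where `u 0 ≥ u 1` are the two largest
eigenvalues of `RᵀR`. -/
theorem bell_violation_two_qubits
    (ρ : Matrix (Fin (1 + 1) → Fin 2) (Fin (1 + 1) → Fin 2) ℂ)
    (hpos : ρ.PosSemidef) (htr : ρ.trace = 1)
    (hH : ((Rmat ρ)ᵀ * Rmat ρ).IsHermitian)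
    (u : Fin 3 → ℝ)
    (hu : ∃ e : Equiv.Perm (Fin 3), ∀ i, u i = hH.eigenvalues (e i))
    (hsort : u 1 ≤ u 0 ∧ u 2 ≤ u 1) :
    sSup (bellSet ρ) = 2 * Real.sqrt (u 0 + u 1) :=
  bell_violation_two_qubits_general ρ hH u hu hsort
end
end

section
/- Let R be any real m×3 matrix and let u₁² ≥ u₂² ≥ u₃² be the eigenvalues of the 3×3 real positive semidefinite matrix RᵀR. Then the supremum, over all pairs of orthonormal vectors c, c′ ∈ ℝ³ and all θ ∈ [0, π/2], of the quantity ‖Rc‖·cos θ + ‖Rc′‖·sin θ equals √(u₁² + u₂²), where ‖·‖ is the Euclidean norm on ℝ^m. -/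
open Matrix BigOperators

noncomputable section

/-- Euclidean norm on `ℝ^m`. -/
def enorm {m : ℕ} (v : Fin m → ℝ) : ℝ := Real.sqrt (∑ i, v i ^ 2)

/-! In an orthonormal eigenbasis `b` of `RᵀR`, `‖Rc‖² + ‖Rc'‖² = ∑ⱼ uⱼ tⱼ` with weights
`tⱼ = ⟪bⱼ, c⟫² + ⟪bⱼ, c'⟫²`. Bessel's inequality gives `tⱼ ≤ 1` and Parseval gives `∑ tⱼ = 2`,
so the sum is at most `u₀ + u₁` (Ky Fan's maximum principle), with equality for the two top
eigenvectors. By Cauchy–Schwarz `A cos θ + B sin θ ≤ √(A² + B²)`, with equality at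
`θ = arg (A + B i) ∈ [0, π/2]` when `A, B ≥ 0`. -/

open Real WithLp
open scoped RealInnerProductSpace

theorem sum_mul_le_add_of_sum_eq_two {ι : Type*} [Fintype ι] {u t : ι → ℝ} {i₀ i₁ : ι}
    (hu₀ : u i₁ ≤ u i₀) (hu₁ : ∀ i ≠ i₀, u i ≤ u i₁) (ht : ∀ i, 0 ≤ t i) (ht₀ : t i₀ ≤ 1)
    (hsum : ∑ i, t i = 2) : ∑ i, u i * t i ≤ u i₀ + u i₁ := by
  classical
  have hrest : ∑ i ∈ Finset.univ.erase i₀, (u i - u i₁) * t i ≤ 0 :=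
    Finset.sum_nonpos fun i hi =>
      mul_nonpos_of_nonpos_of_nonneg (sub_nonpos.2 (hu₁ i (Finset.ne_of_mem_erase hi))) (ht i)
  have hshift : ∑ i, u i * t i = ∑ i, (u i - u i₁) * t i + 2 * u i₁ := by
    rw [← hsum, Finset.sum_mul, ← Finset.sum_add_distrib]
    exact Finset.sum_congr rfl fun i _ => by ring
  rw [hshift, ← Finset.add_sum_erase _ _ (Finset.mem_univ i₀)]
  nlinarith

theorem mul_cos_add_mul_sin_le_sqrt (A B θ : ℝ) : A * cos θ + B * sin θ ≤ √(A ^ 2 + B ^ 2) :=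
  (le_abs_self _).trans <| Real.abs_le_sqrt <| by
    nlinarith [sin_sq_add_cos_sq θ, sq_nonneg (A * sin θ - B * cos θ)]

theorem exists_mul_cos_add_mul_sin_eq_sqrt {A B : ℝ} (hA : 0 ≤ A) (hB : 0 ≤ B) :
    ∃ θ, 0 ≤ θ ∧ θ ≤ π / 2 ∧ A * cos θ + B * sin θ = √(A ^ 2 + B ^ 2) := by
  set z : ℂ := ⟨A, B⟩
  have hz : ‖z‖ = √(A ^ 2 + B ^ 2) := by
    rw [Complex.norm_def, Complex.normSq_mk]; ring_nf
  refine ⟨z.arg, Complex.arg_nonneg_iff.2 hB, Complex.arg_le_pi_div_two_iff.2 (Or.inl hA), ?_⟩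
  rcases eq_or_ne z 0 with h0 | h0
  · obtain ⟨rfl, rfl⟩ : A = 0 ∧ B = 0 := by simpa [z, Complex.ext_iff] using h0
    simp
  have key : ‖z‖ * (A * cos z.arg + B * sin z.arg) = ‖z‖ * ‖z‖ := by
    rw [mul_add, mul_left_comm, Complex.norm_mul_cos_arg, mul_left_comm,
      Complex.norm_mul_sin_arg, hz, Real.mul_self_sqrt (by positivity)]
    ring
  rw [← hz]
  exact mul_left_cancel₀ (norm_ne_zero_iff.2 h0) key

section SymmetricOperator

variable {ι E : Type*} [Fintype ι] [NormedAddCommGroup E] [InnerProductSpace ℝ E]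
  {T : E →ₗ[ℝ] E} {b : OrthonormalBasis ι ℝ E} {μ : ι → ℝ}

theorem LinearMap.IsSymmetric.inner_map_self_eq_sum_mul_sq (hT : T.IsSymmetric)
    (hb : ∀ j, T (b j) = μ j • b j) (x : E) : ⟪T x, x⟫ = ∑ j, μ j * ⟪b j, x⟫ ^ 2 := by
  rw [← b.sum_inner_mul_inner]
  refine Finset.sum_congr rfl fun j _ => ?_
  rw [hT, hb, real_inner_smul_right, real_inner_comm x]
  ring

theorem inner_sq_add_inner_sq_le_one {x y v : E} (hxy : Orthonormal ℝ ![x, y]) (hv : ‖v‖ = 1) :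
    ⟪v, x⟫ ^ 2 + ⟪v, y⟫ ^ 2 ≤ 1 := by
  have := hxy.sum_inner_products_le (x := v) (s := Finset.univ)
  simpa [Fin.sum_univ_two, hv, real_inner_comm v] using this

theorem LinearMap.IsSymmetric.inner_map_self_add_inner_map_self_le (hT : T.IsSymmetric)
    (hb : ∀ j, T (b j) = μ j • b j) {i₀ i₁ : ι} (hμ₀ : μ i₁ ≤ μ i₀)
    (hμ₁ : ∀ i ≠ i₀, μ i ≤ μ i₁) {x y : E} (hxy : Orthonormal ℝ ![x, y]) :
    ⟪T x, x⟫ + ⟪T y, y⟫ ≤ μ i₀ + μ i₁ := by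
  have hparseval : ∑ j, (⟪b j, x⟫ ^ 2 + ⟪b j, y⟫ ^ 2) = 2 := by
    have hx : ‖x‖ = 1 := hxy.norm_eq_one 0
    have hy : ‖y‖ = 1 := hxy.norm_eq_one 1
    rw [Finset.sum_add_distrib, b.sum_sq_inner_right, b.sum_sq_inner_right, hx, hy]
    norm_num
  rw [hT.inner_map_self_eq_sum_mul_sq hb, hT.inner_map_self_eq_sum_mul_sq hb,
    ← Finset.sum_add_distrib]
  simp_rw [← mul_add]
  refine sum_mul_le_add_of_sum_eq_two hμ₀ hμ₁ (fun j => by positivity) ?_ hparseval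
  simpa [real_inner_comm] using inner_sq_add_inner_sq_le_one hxy (b.norm_eq_one i₀)

end SymmetricOperator

theorem Matrix.IsHermitian.toEuclideanLin_eigenvectorBasis {𝕜 n : Type*} [RCLike 𝕜] [Fintype n]
    [DecidableEq n] {A : Matrix n n 𝕜} (hA : A.IsHermitian) (j : n) :
    toEuclideanLin A (hA.eigenvectorBasis j) = hA.eigenvalues j • hA.eigenvectorBasis j := by
  rw [toLpLin_apply, hA.mulVec_eigenvectorBasis, toLp_smul, toLp_ofLp]

theorem enorm_eq_norm_toLp {m : ℕ} (v : Fin m → ℝ) : _root_.enorm v = ‖toLp 2 v‖ := by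
  simp [_root_.enorm, EuclideanSpace.norm_eq]

theorem enorm_mulVec_sq {m : ℕ} {n : Type*} [Fintype n] [DecidableEq n]
    (R : Matrix (Fin m) n ℝ) (c : n → ℝ) :
    _root_.enorm (R *ᵥ c) ^ 2 = ⟪toEuclideanLin (Rᵀ * R) (toLp 2 c), toLp 2 c⟫ := by
  rw [enorm_eq_norm_toLp, ← real_inner_self_eq_norm_sq, toLpLin_toLp,
    EuclideanSpace.inner_toLp_toLp, EuclideanSpace.inner_toLp_toLp, toLin'_apply, ← mulVec_mulVec,
    star_trivial, star_trivial]
  symm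
  rw [dotProduct_mulVec, vecMul_transpose]

theorem orthonormal_toLp_pair_iff {n : Type*} [Fintype n] {c c' : n → ℝ} :
    Orthonormal ℝ ![toLp 2 c, toLp 2 c'] ↔
      ∑ i, c i ^ 2 = 1 ∧ ∑ i, c i * c' i = 0 ∧ ∑ i, c' i ^ 2 = 1 := by
  simp [orthonormal_vecCons_iff, EuclideanSpace.norm_eq, EuclideanSpace.inner_toLp_toLp,
    dotProduct, mul_comm]

/-- for any real `m × 3` matrix `R`, the supremum over orthonormal
`c, c' ∈ ℝ³` and `θ ∈ [0, π/2]` of `‖Rc‖cos θ + ‖Rc'‖sin θ` equals `√(u₁² + u₂²)`,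
where `u 0 ≥ u 1 ≥ u 2` are the eigenvalues of `RᵀR`. -/
theorem key_optimization {m : ℕ} (R : Matrix (Fin m) (Fin 3) ℝ)
    (hH : (Rᵀ * R).IsHermitian)
    (u : Fin 3 → ℝ)
    (hu : ∃ e : Equiv.Perm (Fin 3), ∀ i, u i = hH.eigenvalues (e i))
    (hsort : u 1 ≤ u 0 ∧ u 2 ≤ u 1) :
    sSup {x : ℝ | ∃ (c c' : Fin 3 → ℝ) (θ : ℝ),
        (∑ i, c i ^ 2 = 1) ∧ (∑ i, c' i ^ 2 = 1) ∧ (∑ i, c i * c' i = 0) ∧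
        0 ≤ θ ∧ θ ≤ Real.pi / 2 ∧
        x = _root_.enorm (R.mulVec c) * Real.cos θ + _root_.enorm (R.mulVec c') * Real.sin θ} =
      Real.sqrt (u 0 + u 1) := by
  obtain ⟨e, he⟩ := hu
  set T := toEuclideanLin (Rᵀ * R)
  set b := hH.eigenvectorBasis.reindex e.symm
  have hT : T.IsSymmetric := isSymmetric_toEuclideanLin_iff.2 hH
  have hb : ∀ i, T (b i) = u i • b i := fun i => by
    rw [OrthonormalBasis.reindex_apply, Equiv.symm_symm, he]
    exact hH.toEuclideanLin_eigenvectorBasis (e i)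
  have hsorted : ∀ i ≠ 0, u i ≤ u 1 := by
    intro i hi
    fin_cases i
    exacts [absurd rfl hi, le_rfl, hsort.2]
  have hvalue : ∀ i, _root_.enorm (R *ᵥ ofLp (b i)) ^ 2 = u i := fun i => by
    rw [enorm_mulVec_sq, toLp_ofLp, hb, real_inner_smul_left, real_inner_self_eq_norm_sq,
      b.norm_eq_one, one_pow, mul_one]
  refine IsGreatest.csSup_eq ⟨?_, ?_⟩
  · obtain ⟨θ, hθ₀, hθ₁, hθ⟩ := exists_mul_cos_add_mul_sin_eq_sqrt
      (A := _root_.enorm (R *ᵥ ofLp (b 0))) (B := _root_.enorm (R *ᵥ ofLp (b 1)))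
      (Real.sqrt_nonneg _) (Real.sqrt_nonneg _)
    obtain ⟨h0, h01, h1⟩ :=
      (orthonormal_toLp_pair_iff (c := ofLp (b 0)) (c' := ofLp (b 1))).1 <| by
        simp [b.norm_eq_one, b.orthonormal.inner_eq_zero (show (0 : Fin 3) ≠ 1 by decide)]
    refine ⟨ofLp (b 0), ofLp (b 1), θ, h0, h1, h01, hθ₀, hθ₁, ?_⟩
    rw [hθ, hvalue, hvalue]
  · rintro _ ⟨c, c', θ, hc, hc', hcc', -, -, rfl⟩
    calc _ ≤ √(_root_.enorm (R *ᵥ c) ^ 2 + _root_.enorm (R *ᵥ c') ^ 2) :=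
          mul_cos_add_mul_sin_le_sqrt _ _ θ
      _ ≤ √(u 0 + u 1) := by
          refine Real.sqrt_le_sqrt ?_
          rw [enorm_mulVec_sq, enorm_mulVec_sq]
          exact hT.inner_map_self_add_inner_map_self_le hb hsort.1 hsorted
            (orthonormal_toLp_pair_iff.2 ⟨hc, hcc', hc'⟩)
end
end

section
/- Let ψ = e_u ⊗ (λ₊ e_v ⊗ e₁ + λ₋ e_{v̄} ⊗ e₀) ∈ (ℂ²)^{⊗n} and ρ = |ψ⟩⟨ψ|. Then the 3×3 real matrix RᵀR, where R is the R-matrix of ρ, is diagonal. -/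
open Matrix BigOperators

noncomputable section

/-! ψ is supported on the two basis vectors `f₊ = (u, v, 1)` and `f₋ = (u, v̄, 0)`, so each
entry `R_{I,i}` only involves the entries of the Pauli string `σ_I ⊗ σ_i` at `(f₊, f₊)`,
`(f₋, f₋)` and `(f₋, f₊)`. The `σ_z` column can only be nonzero for `I = (z, …, z)` (diagonal
entries), while the `σ_x` and `σ_y` columns vanish there because `f₊` and `f₋` differ inside
the `v`-block, where `σ_z` has no off-diagonal entries. Finally `R_{I,x}` and `R_{I,y}` are, up
to the factor `2λ₊λ₋`, the real and imaginary part of one product of Pauli entries, each of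
which is real or purely imaginary. Hence `R_{I,i} R_{I,j} = 0` for `i ≠ j` and every `I`. -/

section Pauli

lemma σp_conjTranspose (j : Fin 3) : (σp j)ᴴ = σp j := by
  ext a b
  fin_cases j <;> fin_cases a <;> fin_cases b <;> simp [σp]

lemma σp_apply_self_eq_zero {j : Fin 3} (hj : j ≠ 2) (b : Fin 2) : σp j b b = 0 := by
  fin_cases j <;> fin_cases b <;> simp_all [σp]

lemma σp_two_apply_eq_zero {a b : Fin 2} (h : a ≠ b) : σp 2 a b = 0 := by
  fin_cases a <;> fin_cases b <;> simp_all [σp]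

lemma σp_apply_re_eq_zero_or_im_eq_zero (j : Fin 3) (a b : Fin 2) :
    (σp j a b).re = 0 ∨ (σp j a b).im = 0 := by
  fin_cases j <;> fin_cases a <;> fin_cases b <;> simp [σp]

end Pauli

section Kron

variable {n : ℕ}

lemma kron_conjTranspose (A : Fin n → Matrix (Fin 2) (Fin 2) ℂ) :
    (kron A)ᴴ = kron fun i => (A i)ᴴ := by
  ext f g
  simp [kron, conjTranspose_apply]

lemma kron_snoc_apply (A : Fin (n + 1) → Matrix (Fin 2) (Fin 2) ℂ) (f g : Fin n → Fin 2)
    (a b : Fin 2) :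
    kron A (Fin.snoc f a) (Fin.snoc g b) =
      kron (fun i => A i.castSucc) f g * A (Fin.last n) a b := by
  simp [kron, Fin.prod_univ_castSucc]

def pauliString (I : Fin n → Fin 3) : Matrix (Fin n → Fin 2) (Fin n → Fin 2) ℂ :=
  kron fun s => σp (I s)

lemma Rmat_apply {m : ℕ} (ρ : Matrix (Fin (m + 1) → Fin 2) (Fin (m + 1) → Fin 2) ℂ)
    (I : Fin m → Fin 3) (i : Fin 3) :
    Rmat ρ I i = ((ρ * pauliString (Fin.snoc I i)).trace).re :=
  rfl

lemma pauliString_isHermitian (I : Fin n → Fin 3) : (pauliString I).IsHermitian := by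
  simp [IsHermitian, pauliString, kron_conjTranspose, σp_conjTranspose]

lemma pauliString_snoc_apply (I : Fin n → Fin 3) (i : Fin 3) (f g : Fin n → Fin 2)
    (a b : Fin 2) :
    pauliString (Fin.snoc I i) (Fin.snoc f a) (Fin.snoc g b) = pauliString I f g * σp i a b := by
  simp [pauliString, kron_snoc_apply]

lemma pauliString_apply_self_eq_zero {I : Fin n → Fin 3} (hI : ∃ s, I s ≠ 2)
    (f : Fin n → Fin 2) : pauliString I f f = 0 :=
  let ⟨s, hs⟩ := hI
  Finset.prod_eq_zero (Finset.mem_univ s) (σp_apply_self_eq_zero hs _)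

lemma pauliString_apply_eq_zero_of_ne {I : Fin n → Fin 3} (hI : ∀ s, I s = 2)
    {f g : Fin n → Fin 2} (hfg : f ≠ g) : pauliString I f g = 0 := by
  obtain ⟨s, hs⟩ := Function.ne_iff.mp hfg
  exact Finset.prod_eq_zero (Finset.mem_univ s) (by simp [hI s, σp_two_apply_eq_zero hs])

lemma pauliString_apply_re_eq_zero_or_im_eq_zero (I : Fin n → Fin 3) (f g : Fin n → Fin 2) :
    (pauliString I f g).re = 0 ∨ (pauliString I f g).im = 0 := by
  refine Finset.prod_induction _ (fun z : ℂ => z.re = 0 ∨ z.im = 0) ?_ (by simp)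
    (fun s _ => σp_apply_re_eq_zero_or_im_eq_zero _ _ _)
  rintro z w (hz | hz) (hw | hw) <;> simp [Complex.mul_re, Complex.mul_im, hz, hw]

end Kron

section TwoTermState

variable {ι : Type*} [Fintype ι] [DecidableEq ι]

def twoTermState (a b : ℝ) (f g : ι) : ι → ℂ :=
  (a : ℂ) • Pi.single f 1 + (b : ℂ) • Pi.single g 1

lemma trace_outer_twoTermState_mul (a b : ℝ) (f g : ι) (M : Matrix ι ι ℂ) :
    (outer (twoTermState a b f g) * M).trace =
      a ^ 2 * M f f + a * b * M f g + a * b * M g f + b ^ 2 * M g g := by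
  simp [trace, mul_apply, outer, twoTermState, Pi.single_apply, add_mul, mul_add,
    Finset.sum_add_distrib, ite_mul, mul_ite, apply_ite (starRingEnd ℂ)]
  ring

lemma re_trace_outer_twoTermState_mul (a b : ℝ) (f g : ι) {M : Matrix ι ι ℂ}
    (hM : M.IsHermitian) :
    ((outer (twoTermState a b f g) * M).trace).re =
      a ^ 2 * (M f f).re + b ^ 2 * (M g g).re + 2 * a * b * (M g f).re := by
  have hfg : (M f g).re = (M g f).re := by rw [← hM.apply g f, Complex.star_def, Complex.conj_re]
  simp only [trace_outer_twoTermState_mul, Complex.add_re, ← Complex.ofReal_pow,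
    ← Complex.ofReal_mul, Complex.re_ofReal_mul, hfg]
  ring

end TwoTermState

section RMatrix

variable {n : ℕ} {a b : ℝ} {w w' : Fin n → Fin 2}

lemma Rmat_outer_twoTermState_apply (I : Fin n → Fin 3) (i : Fin 3) :
    Rmat (outer (twoTermState a b (Fin.snoc w 1) (Fin.snoc w' 0))) I i =
      a ^ 2 * (pauliString I w w * σp i 1 1).re + b ^ 2 * (pauliString I w' w' * σp i 0 0).re +
        2 * a * b * (pauliString I w' w * σp i 0 1).re := by
  rw [Rmat_apply, re_trace_outer_twoTermState_mul _ _ _ _ (pauliString_isHermitian _)]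
  simp only [pauliString_snoc_apply]

lemma Rmat_outer_twoTermState_apply_two {I : Fin n → Fin 3} (hI : ∃ s, I s ≠ 2) :
    Rmat (outer (twoTermState a b (Fin.snoc w 1) (Fin.snoc w' 0))) I 2 = 0 := by
  simp [Rmat_outer_twoTermState_apply, pauliString_apply_self_eq_zero hI,
    σp_two_apply_eq_zero (show (0 : Fin 2) ≠ 1 by decide)]

lemma Rmat_outer_twoTermState_apply_of_ne_two (hw : w' ≠ w) {I : Fin n → Fin 3}
    (hI : ∀ s, I s = 2) {i : Fin 3} (hi : i ≠ 2) :
    Rmat (outer (twoTermState a b (Fin.snoc w 1) (Fin.snoc w' 0))) I i = 0 := by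
  simp [Rmat_outer_twoTermState_apply, σp_apply_self_eq_zero hi,
    pauliString_apply_eq_zero_of_ne hI hw]

lemma Rmat_outer_twoTermState_apply_zero_mul_apply_one (I : Fin n → Fin 3) :
    Rmat (outer (twoTermState a b (Fin.snoc w 1) (Fin.snoc w' 0))) I 0 *
      Rmat (outer (twoTermState a b (Fin.snoc w 1) (Fin.snoc w' 0))) I 1 = 0 := by
  rcases pauliString_apply_re_eq_zero_or_im_eq_zero I w' w with h | h <;>
    simp [Rmat_outer_twoTermState_apply, σp, Complex.mul_re, h]

lemma Rmat_outer_twoTermState_apply_mul_apply_eq_zero (hw : w' ≠ w)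
    (I : Fin n → Fin 3) {i j : Fin 3} (hij : i ≠ j) :
    Rmat (outer (twoTermState a b (Fin.snoc w 1) (Fin.snoc w' 0))) I i *
      Rmat (outer (twoTermState a b (Fin.snoc w 1) (Fin.snoc w' 0))) I j = 0 := by
  by_cases hI : ∀ s, I s = 2
  · rcases ne_or_eq i 2 with hi | rfl
    · rw [Rmat_outer_twoTermState_apply_of_ne_two hw hI hi, zero_mul]
    · rw [Rmat_outer_twoTermState_apply_of_ne_two hw hI hij.symm, mul_zero]
  · push Not at hI
    fin_cases i <;> fin_cases j <;>
      simp_all [Rmat_outer_twoTermState_apply_two,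
        Rmat_outer_twoTermState_apply_zero_mul_apply_one, mul_comm (Rmat _ I 1)]

theorem RtR_outer_twoTermState_apply_eq_zero (hw : w' ≠ w) {i j : Fin 3} (hij : i ≠ j) :
    ((Rmat (outer (twoTermState a b (Fin.snoc w 1) (Fin.snoc w' 0))))ᵀ *
      Rmat (outer (twoTermState a b (Fin.snoc w 1) (Fin.snoc w' 0)))) i j = 0 :=
  Finset.sum_eq_zero fun I _ =>
    Rmat_outer_twoTermState_apply_mul_apply_eq_zero hw I hij

end RMatrix

section PsiState

variable {k m : ℕ} {α : Type*}

lemma eq_snoc_append_iff {f : Fin (k + m + 1) → α} {u : Fin k → α} {v : Fin m → α} {c : α} :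
    f = Fin.snoc (Fin.append u v) c ↔
      (fun i => f (Fin.castLE (by omega) i)) = u ∧
        (fun i : Fin m => f ⟨k + i.1, by omega⟩) = v ∧ f (Fin.last (k + m)) = c := by
  have hl (i : Fin k) : Fin.castLE (by omega) i = (Fin.castAdd m i).castSucc := rfl
  have hr (i : Fin m) :
      (⟨k + i.1, by omega⟩ : Fin (k + m + 1)) = (Fin.natAdd k i).castSucc := rfl
  constructor
  · rintro rfl
    refine ⟨funext fun i => ?_, funext fun i => ?_, Fin.snoc_last _ _⟩
    · rw [hl, Fin.snoc_castSucc, Fin.append_left]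
    · rw [hr, Fin.snoc_castSucc, Fin.append_right]
  · rintro ⟨rfl, rfl, rfl⟩
    conv_lhs => rw [← Fin.snoc_init_self f, ← Fin.append_castAdd_natAdd (f := Fin.init f)]
    rfl

lemma psiState_eq_twoTermState (u : Fin k → Fin 2) (v : Fin m → Fin 2) (lp lm : ℝ) :
    psiState k m u v lp lm =
      twoTermState lp lm (Fin.snoc (Fin.append u v) 1)
        (Fin.snoc (Fin.append u fun i => flip2 (v i)) 0) := by
  funext f
  simp only [psiState, twoTermState, Pi.add_apply, Pi.smul_apply, smul_eq_mul, Pi.single_apply,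
    eq_snoc_append_iff]
  split_ifs <;> grind

lemma flip2_ne (b : Fin 2) : flip2 b ≠ b := by
  fin_cases b <;> decide

lemma append_flip2_ne_append (hm : 1 ≤ m) (u : Fin k → Fin 2) (v : Fin m → Fin 2) :
    (Fin.append u fun i => flip2 (v i)) ≠ Fin.append u v := fun h =>
  flip2_ne (v ⟨0, hm⟩) <| by
    simpa only [Fin.append_right] using congrFun h (Fin.natAdd k ⟨0, hm⟩)

end PsiState

theorem RtR_diagonal_general {k m : ℕ} (hm : 1 ≤ m)
    (u : Fin k → Fin 2) (v : Fin m → Fin 2) (lp lm : ℝ) :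
    ∀ i j : Fin 3, i ≠ j →
      ((Rmat (outer (psiState k m u v lp lm)))ᵀ *
        Rmat (outer (psiState k m u v lp lm))) i j = 0 := by
  intro i j hij
  rw [psiState_eq_twoTermState]
  exact RtR_outer_twoTermState_apply_eq_zero (append_flip2_ne_append hm u v) hij

/-- for `ψ = e_u ⊗ (λ₊ e_v ⊗ e₁ + λ₋ e_{v̄} ⊗ e₀)` and `ρ = |ψ⟩⟨ψ|`,
the 3×3 real matrix `RᵀR` built from the R-matrix of `ρ` is diagonal. -/
theorem RtR_diagonal {k m : ℕ} (hm : 1 ≤ m)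
    (u : Fin k → Fin 2) (v : Fin m → Fin 2) (lp lm : ℝ)
    (hlp : 0 < lp) (hlm : 0 < lm) (hnorm : lp ^ 2 + lm ^ 2 = 1) :
    ∀ i j : Fin 3, i ≠ j →
      ((Rmat (outer (psiState k m u v lp lm)))ᵀ *
        Rmat (outer (psiState k m u v lp lm))) i j = 0 :=
  RtR_diagonal_general hm u v lp lm
end
end

section
/- Let ψ = λ₊·e₁⊗e₁ + λ₋·e₀⊗e₀ ∈ ℂ²⊗ℂ² with λ₊, λ₋ > 0 and λ₊² + λ₋² = 1, and let C = 2λ₊λ₋ be its concurrence. Then the maximum violation of the Bell inequality for ρ = |ψ⟩⟨ψ|, i.e. the supremum of Tr(ρ·B̃₂) over all Bell operators B̃₂, equals 2·√(1 + C²). -/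
open Matrix BigOperators

noncomputable section

/-- The two-qubit state `ψ = λ₊ e₁⊗e₁ + λ₋ e₀⊗e₀`. -/
def psiTwo (lp lm : ℝ) : (Fin (1 + 1) → Fin 2) → ℂ := fun f =>
  (lp : ℂ) * (if f = ![1, 1] then 1 else 0) + (lm : ℂ) * (if f = ![0, 0] then 1 else 0)

/-!
Write `w = a + a'`, `v = a - a'`. The Bell value of `|ψ⟩⟨ψ|` is `b·T w + b'·T v` with correlation
matrix `T = diag(C, -C, 1)`, so it is at most `|T w| + |T v|`, where `w ⊥ v` and
`|w|² + |v|² = 4`. Since `|T w|² = C²|w|² + (1 - C²) w_z²`, Cauchy–Schwarz with weights `|w|²`,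
`|v|²` together with Bessel's inequality `w_z²/|w|² + v_z²/|v|² ≤ 1` bounds this by
`2√(1 + C²)`, which is attained with `b = z`, `b' = x`.
-/

lemma dotSigma_eq (u : Fin 3 → ℝ) :
    dotSigma u = !![(u 2 : ℂ), u 0 - Complex.I * u 1; u 0 + Complex.I * u 1, -u 2] := by
  ext i j
  fin_cases i <;> fin_cases j <;> simp [dotSigma, σp, Fin.sum_univ_three] <;> ring

lemma bellOp_apply_two (a a' : Fin 2 → Fin 3 → ℝ) (f g : Fin 2 → Fin 2) :
    bellOp a a' f g = dotSigma (a 0) (f 0) (g 0) * dotSigma (a 1 + a' 1) (f 1) (g 1)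
      + dotSigma (a' 0) (f 0) (g 0) * dotSigma (a 1 - a' 1) (f 1) (g 1) := by
  simp [bellOp, kron, Fin.prod_univ_two, Fin.last]

lemma trace_outer_mul {ι : Type*} [Fintype ι] (ψ : ι → ℂ) (M : Matrix ι ι ℂ) :
    (outer ψ * M).trace = star ψ ⬝ᵥ (M *ᵥ ψ) := by
  simp only [trace, diag, mul_apply, outer, dotProduct, mulVec, Finset.mul_sum]
  rw [Finset.sum_comm]
  refine Finset.sum_congr rfl fun _ _ => Finset.sum_congr rfl fun _ _ => ?_
  simp only [Pi.star_apply, RCLike.star_def]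
  ring

lemma trace_outer_psiTwo_mul (lp lm : ℝ) (M : Matrix (Fin 2 → Fin 2) (Fin 2 → Fin 2) ℂ) :
    (outer (psiTwo lp lm) * M).trace =
      lp ^ 2 * M ![1, 1] ![1, 1] + lp * lm * M ![1, 1] ![0, 0]
      + lm * lp * M ![0, 0] ![1, 1] + lm ^ 2 * M ![0, 0] ![0, 0] := by
  rw [trace_outer_mul]
  simp [psiTwo, dotProduct, mulVec, Finset.sum_add_distrib, mul_add, add_mul, ite_mul, mul_ite,
    apply_ite (starRingEnd ℂ)]
  ring

/-- The correlation matrix `Tᵢⱼ = Tr(ρ σᵢ ⊗ σⱼ)` of `ρ = |psiTwo lp lm⟩⟨psiTwo lp lm|`. -/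
def psiTwoCorrelation (lp lm : ℝ) : Matrix (Fin 3) (Fin 3) ℝ :=
  diagonal ![2 * lp * lm, -(2 * lp * lm), lp ^ 2 + lm ^ 2]

lemma re_trace_outer_psiTwo_mul_bellOp (lp lm : ℝ) (a a' : Fin 2 → Fin 3 → ℝ) :
    ((outer (psiTwo lp lm) * bellOp a a').trace).re =
      a 0 ⬝ᵥ (psiTwoCorrelation lp lm *ᵥ (a 1 + a' 1))
        + a' 0 ⬝ᵥ (psiTwoCorrelation lp lm *ᵥ (a 1 - a' 1)) := by
  rw [trace_outer_psiTwo_mul]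
  simp [bellOp_apply_two, dotSigma_eq, psiTwoCorrelation, dotProduct, mulVec_diagonal,
    Fin.sum_univ_three, ← Complex.ofReal_pow]
  ring

lemma dotProduct_le_sqrt {ι : Type*} [Fintype ι] {b : ι → ℝ} (hb : ∑ i, b i ^ 2 = 1)
    (u : ι → ℝ) : b ⬝ᵥ u ≤ √(∑ i, u i ^ 2) := by
  simpa [hb, dotProduct] using Real.sum_mul_le_sqrt_mul_sqrt Finset.univ b u

lemma sum_sq_add_add_sum_sq_sub {ι : Type*} [Fintype ι] (a a' : ι → ℝ) :
    ∑ i, (a + a') i ^ 2 + ∑ i, (a - a') i ^ 2 = 2 * (∑ i, a i ^ 2 + ∑ i, a' i ^ 2) := by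
  simp only [Pi.add_apply, Pi.sub_apply, ← Finset.sum_add_distrib, Finset.mul_sum]
  exact Finset.sum_congr rfl fun _ _ => by ring

lemma add_dotProduct_sub {ι : Type*} [Fintype ι] (a a' : ι → ℝ) :
    (a + a') ⬝ᵥ (a - a') = ∑ i, a i ^ 2 - ∑ i, a' i ^ 2 := by
  simp only [dotProduct, Pi.add_apply, Pi.sub_apply, ← Finset.sum_sub_distrib]
  exact Finset.sum_congr rfl fun _ _ => by ring

lemma sq_mul_sum_sq_add_sq_mul_sum_sq_le {w v : Fin 3 → ℝ} (h : w ⬝ᵥ v = 0) :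
    w 2 ^ 2 * ∑ i, v i ^ 2 + v 2 ^ 2 * ∑ i, w i ^ 2 ≤ (∑ i, w i ^ 2) * ∑ i, v i ^ 2 := by
  simp only [dotProduct, Fin.sum_univ_three] at h ⊢
  have hsq : (w 2 * v 2) ^ 2 = (w 0 * v 0 + w 1 * v 1) ^ 2 := by
    rw [show w 2 * v 2 = -(w 0 * v 0 + w 1 * v 1) by linarith]; ring
  nlinarith [sq_nonneg (w 0 * v 1 - w 1 * v 0)]

lemma sum_sq_diagonal_mulVec (C : ℝ) (w : Fin 3 → ℝ) :
    ∑ i, (diagonal ![C, -C, 1] *ᵥ w) i ^ 2 = C ^ 2 * ∑ i, w i ^ 2 + (1 - C ^ 2) * w 2 ^ 2 := by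
  simp [mulVec_diagonal, Fin.sum_univ_three]
  ring

lemma sqrt_add_sqrt_le_two_sqrt_one_add {e x y p q : ℝ} (he : 0 ≤ e) (he1 : e ≤ 1)
    (hp : 0 ≤ p) (hq : 0 ≤ q) (hpx : p ≤ x) (hqy : q ≤ y) (hxy : x + y = 4)
    (hpq : p * y + q * x ≤ x * y) :
    √(e * x + (1 - e) * p) + √(e * y + (1 - e) * q) ≤ 2 * √(1 + e) := by
  set A := e * x + (1 - e) * p
  set B := e * y + (1 - e) * q
  have hA : 0 ≤ A := by nlinarith
  have hB : 0 ≤ B := by nlinarith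
  have hAx : A ≤ x := by nlinarith
  have hBy : B ≤ y := by nlinarith
  have hX := Real.sq_sqrt hA
  have hY := Real.sq_sqrt hB
  have hX0 := Real.sqrt_nonneg A
  have hY0 := Real.sqrt_nonneg B
  have hsq : (√A + √B) ^ 2 ≤ 4 * (1 + e) := by
    -- Cauchy–Schwarz with weights `x`, `y`, cleared of denominators
    have hweighted : x * y * (√A + √B) ^ 2 ≤ x * y * (4 * (1 + e)) := by
      have hid : x * y * (√A + √B) ^ 2 = 4 * (A * y + B * x) - (y * √A - x * √B) ^ 2 := by
        rw [← hxy]; linear_combination (y * (x + y)) * hX + (x * (x + y)) * hY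
      have hAB : A * y + B * x ≤ (1 + e) * (x * y) := by
        nlinarith [mul_le_mul_of_nonneg_left hpq (sub_nonneg.2 he1)]
      rw [hid]; nlinarith [sq_nonneg (y * √A - x * √B)]
    rcases (mul_nonneg (hp.trans hpx) (hq.trans hqy)).eq_or_lt with hdeg | hpos
    · rcases mul_eq_zero.1 hdeg.symm with h | h
      · have : √A = 0 := by nlinarith
        rw [this]; nlinarith
      · have : √B = 0 := by nlinarith
        rw [this]; nlinarith
    · exact le_of_mul_le_mul_left hweighted hpos
  calc √A + √B ≤ √(2 ^ 2 * (1 + e)) := Real.le_sqrt_of_sq_le (by linarith)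
    _ = 2 * √(1 + e) := by rw [Real.sqrt_mul (by positivity), Real.sqrt_sq zero_le_two]

lemma bell_value_le {C : ℝ} (hC : C ^ 2 ≤ 1) {b b' a a' : Fin 3 → ℝ} (hb : IsUnitVec b)
    (hb' : IsUnitVec b') (ha : IsUnitVec a) (ha' : IsUnitVec a') :
    b ⬝ᵥ (diagonal ![C, -C, 1] *ᵥ (a + a')) + b' ⬝ᵥ (diagonal ![C, -C, 1] *ᵥ (a - a'))
      ≤ 2 * √(1 + C ^ 2) := by
  have hlen : ∑ i, (a + a') i ^ 2 + ∑ i, (a - a') i ^ 2 = 4 := by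
    rw [sum_sq_add_add_sum_sq_sub, ha, ha']; norm_num
  have horth : (a + a') ⬝ᵥ (a - a') = 0 := by
    rw [add_dotProduct_sub, ha, ha']; norm_num
  calc _ ≤ √(∑ i, (diagonal ![C, -C, 1] *ᵥ (a + a')) i ^ 2)
        + √(∑ i, (diagonal ![C, -C, 1] *ᵥ (a - a')) i ^ 2) :=
        add_le_add (dotProduct_le_sqrt hb _) (dotProduct_le_sqrt hb' _)
    _ ≤ 2 * √(1 + C ^ 2) := by
      rw [sum_sq_diagonal_mulVec, sum_sq_diagonal_mulVec]
      refine sqrt_add_sqrt_le_two_sqrt_one_add (sq_nonneg C) hC (sq_nonneg _) (sq_nonneg _)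
        ?_ ?_ hlen (sq_mul_sum_sq_add_sq_mul_sum_sq_le horth)
      all_goals exact Finset.single_le_sum (fun i _ => sq_nonneg _) (Finset.mem_univ _)

lemma two_sqrt_one_add_sq_mem_bellSet {lp lm : ℝ} (hnorm : lp ^ 2 + lm ^ 2 = 1) :
    2 * √(1 + (2 * lp * lm) ^ 2) ∈ bellSet (outer (psiTwo lp lm)) := by
  set C := 2 * lp * lm
  set r := (√(1 + C ^ 2))⁻¹
  have hs : √(1 + C ^ 2) ^ 2 = 1 + C ^ 2 := Real.sq_sqrt (by positivity)
  have hr : r * √(1 + C ^ 2) = 1 := inv_mul_cancel₀ (by positivity)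
  have hr2 : r ^ 2 * (1 + C ^ 2) = 1 := by rw [← hs, ← mul_pow, hr, one_pow]
  -- `b = z`, `b' = x`, and `a ± a'` along `z` and `x` with lengths in the ratio `1 : C`
  refine ⟨![![0, 0, 1], ![C * r, 0, r]], ![![1, 0, 0], ![-(C * r), 0, r]], ?_, ?_, ?_⟩
  · intro i
    fin_cases i
    all_goals simp [IsUnitVec, Fin.sum_univ_three]
    linear_combination hr2
  · intro i
    fin_cases i
    all_goals simp [IsUnitVec, Fin.sum_univ_three]
    linear_combination hr2
  · rw [re_trace_outer_psiTwo_mul_bellOp]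
    simp [psiTwoCorrelation, hnorm, dotProduct, mulVec_diagonal, Fin.sum_univ_three]
    linear_combination (-2 * √(1 + C ^ 2)) * hr + 2 * r * hs

theorem max_violation_two_qubit_state_general (lp lm : ℝ)
    (hnorm : lp ^ 2 + lm ^ 2 = 1)
    (C : ℝ) (hC : C = 2 * lp * lm) :
    sSup (bellSet (outer (psiTwo lp lm))) = 2 * Real.sqrt (1 + C ^ 2) := by
  subst hC
  have hT : psiTwoCorrelation lp lm = diagonal ![2 * lp * lm, -(2 * lp * lm), 1] := by
    rw [psiTwoCorrelation, hnorm]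
  have hC1 : (2 * lp * lm) ^ 2 ≤ 1 := by nlinarith [sq_nonneg (lp ^ 2 - lm ^ 2)]
  refine IsGreatest.csSup_eq ⟨two_sqrt_one_add_sq_mem_bellSet hnorm, ?_⟩
  rintro x ⟨a, a', ha, ha', rfl⟩
  rw [re_trace_outer_psiTwo_mul_bellOp, hT]
  exact bell_value_le hC1 (ha 0) (ha' 0) (ha 1) (ha' 1)

/-- for the two-qubit state `ψ = λ₊ e₁⊗e₁ + λ₋ e₀⊗e₀` with concurrence
`C = 2λ₊λ₋`, the maximum violation of the Bell inequality for `ρ = |ψ⟩⟨ψ|` equals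
`2√(1 + C²)`. -/
theorem max_violation_two_qubit_state (lp lm : ℝ)
    (hlp : 0 < lp) (hlm : 0 < lm) (hnorm : lp ^ 2 + lm ^ 2 = 1)
    (C : ℝ) (hC : C = 2 * lp * lm) :
    sSup (bellSet (outer (psiTwo lp lm))) = 2 * Real.sqrt (1 + C ^ 2) :=
  max_violation_two_qubit_state_general lp lm hnorm C hC
end
end

section
/- Let G = (λ₊/√2)(−|111000⟩ + |001110⟩) + (λ₋/√2)(|100011⟩ + |010101⟩) ∈ (ℂ²)^{⊗6} with λ₊, λ₋ ≥ 0 and λ₊² + λ₋² = 1. Then: (i) the reduced density matrix ρ_{A(1)} of qubit 6 (partial trace over qubits 1–5) equals diag(λ₊², λ₋²) in the basis (|0⟩,|1⟩), so Tr ρ_{A(1)}² = λ₊⁴ + λ₋⁴; (ii) the reduced density matrix ρ_{A(2)} of qubits 5 and 6 (partial trace over qubits 1–4) is diagonal with entries (λ₊²/2, λ₋²/2, λ₊²/2, λ₋²/2) in the basis (|00⟩,|01⟩,|10⟩,|11⟩), so Tr ρ_{A(2)}² = (λ₊⁴ + λ₋⁴)/2; (iii) consequently the modified concurrences C(δ)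 := √(2(1 − 2^{δ−1}·Tr ρ_{A(δ)}²)) satisfy C(1) = C(2) = √(2(1 − λ₊⁴ − λ₋⁴)) = 2λ₊λ₋. -/
open Matrix BigOperators

noncomputable section

/-- The paper's six-qubit state
`G = (λ₊/√2)(−|111000⟩ + |001110⟩) + (λ₋/√2)(|100011⟩ + |010101⟩)`. -/
def G6 (lp lm : ℝ) : (Fin (4 + 1 + 1) → Fin 2) → ℂ := fun f =>
  (lp : ℂ) / (Real.sqrt 2 : ℂ) *
      (-(if f = ![1, 1, 1, 0, 0, 0] then 1 else 0) +
        (if f = ![0, 0, 1, 1, 1, 0] then 1 else 0)) +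
  (lm : ℂ) / (Real.sqrt 2 : ℂ) *
      ((if f = ![1, 0, 0, 0, 1, 1] then 1 else 0) +
        (if f = ![0, 1, 0, 1, 0, 1] then 1 else 0))

/-- Reduced density matrix of the last two qubits (qubits 5 and 6) of a six-qubit
state: the partial trace of `|ψ⟩⟨ψ|` over the first four qubits, in the basis
`(|00⟩, |01⟩, |10⟩, |11⟩)` indexed by `Fin 2 × Fin 2`. -/
def rhoA2 (ψ : (Fin (4 + 1 + 1) → Fin 2) → ℂ) :
    Matrix (Fin 2 × Fin 2) (Fin 2 × Fin 2) ℂ :=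
  fun s t => ∑ g : Fin 4 → Fin 2,
    ψ (Fin.snoc (Fin.snoc g s.1) s.2) * (starRingEnd ℂ) (ψ (Fin.snoc (Fin.snoc g t.1) t.2))

/-! The four basis strings of `G` have pairwise distinct restrictions to qubits 1–4, hence
also to qubits 1–5. Tracing out those qubits therefore produces no cross terms: the reduced
density matrix is diagonal, and each string contributes `|cₖ|²` at the value it takes on the
kept qubits. The concurrences then come down to `2(1 − λ₊⁴ − λ₋⁴) = 4λ₊²λ₋²`, which is
`(λ₊² + λ₋²)² = 1`. -/

section Superposition

variable {P S X ι : Type*} [DecidableEq X] [Fintype ι]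
  {e : P → S → X} {p : ι → P} {σ : ι → S}

def superposition (c : ι → ℂ) (b : ι → X) : X → ℂ :=
  ∑ k, Pi.single (b k) (c k)

theorem superposition_apply (c : ι → ℂ) (b : ι → X) (x : X) :
    superposition c b x = ∑ k, if x = b k then c k else 0 := by
  simp [superposition, Pi.single_apply]

theorem superposition_apply_of_injective2 [DecidableEq S] (he : Function.Injective2 e)
    (hp : p.Injective) (c : ι → ℂ) (j : ι) (s : S) :
    superposition c (fun k => e (p k) (σ k)) (e (p j) s) = if s = σ j then c j else 0 := by
  rw [superposition_apply,
    Finset.sum_eq_single j (fun k _ hk => if_neg fun h => hk (hp (he h).1).symm) (by simp)]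
  simp [he.eq_iff]

theorem superposition_apply_of_notMem_range (he : Function.Injective2 e) (c : ι → ℂ) {g : P}
    (hg : g ∉ Set.range p) (s : S) :
    superposition c (fun k => e (p k) (σ k)) (e g s) = 0 := by
  rw [superposition_apply]
  exact Finset.sum_eq_zero fun k _ => if_neg fun h => hg ⟨k, (he h).1.symm⟩

theorem partialTrace_superposition [Fintype P] [DecidableEq S] (he : Function.Injective2 e)
    (hp : p.Injective) (c : ι → ℂ) (s t : S) :
    ∑ g, superposition c (fun k => e (p k) (σ k)) (e g s) *
        starRingEnd ℂ (superposition c (fun k => e (p k) (σ k)) (e g t)) =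
      diagonal (fun s => ∑ k with σ k = s, c k * starRingEnd ℂ (c k)) s t := by
  rw [← Fintype.sum_of_injective p hp _ _ (fun g hg => by
    simp [superposition_apply_of_notMem_range he c hg]) fun _ => rfl]
  simp only [superposition_apply_of_injective2 he hp, diagonal_apply, Finset.sum_filter]
  split_ifs with hst
  · subst hst
    refine Finset.sum_congr rfl fun k _ => ?_
    split_ifs <;> simp_all [eq_comm]
  · refine Finset.sum_eq_zero fun k _ => ?_
    split_ifs <;> simp_all

end Superposition

theorem rhoA_superposition {N : ℕ} {ι : Type*} [Fintype ι] (c : ι → ℂ)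
    (b : ι → Fin (N + 1) → Fin 2) (hb : Function.Injective fun k => Fin.init (b k)) :
    rhoA (superposition c b) =
      diagonal (fun s => ∑ k with b k (Fin.last N) = s, c k * starRingEnd ℂ (c k)) := by
  have hsplit : b = fun k => Fin.snoc (Fin.init (b k)) (b k (Fin.last N)) := by
    simp only [Fin.snoc_init_self]
  ext s t
  conv_lhs => rw [hsplit]
  exact partialTrace_superposition (Fin.snoc_injective2 (α := fun _ => Fin 2)) hb c s t

theorem rhoA2_superposition {ι : Type*} [Fintype ι] (c : ι → ℂ)
    (b : ι → Fin (4 + 1 + 1) → Fin 2)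
    (hb : Function.Injective fun k => Fin.init (Fin.init (b k))) :
    rhoA2 (superposition c b) =
      diagonal (fun s => ∑ k with (Fin.init (b k) (Fin.last 4), b k (Fin.last 5)) = s,
        c k * starRingEnd ℂ (c k)) := by
  have hsplit : b = fun k => Fin.snoc
      (Fin.snoc (Fin.init (Fin.init (b k))) (Fin.init (b k) (Fin.last 4))) (b k (Fin.last 5)) := by
    simp only [Fin.snoc_init_self]
  have he : Function.Injective2 fun (g : Fin 4 → Fin 2) (s : Fin 2 × Fin 2) =>
      (Fin.snoc (Fin.snoc g s.1) s.2 : Fin (4 + 1 + 1) → Fin 2) := by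
    intro g g' s s' h
    obtain ⟨h₁, h₂⟩ := Fin.snoc_injective2 h
    obtain ⟨h₃, h₄⟩ := Fin.snoc_injective2 h₁
    exact ⟨h₃, Prod.ext h₄ h₂⟩
  ext s t
  conv_lhs => rw [hsplit]
  exact partialTrace_superposition
    (σ := fun k => (Fin.init (b k) (Fin.last 4), b k (Fin.last 5))) he hb c s t

def g6Basis : Fin 4 → Fin (4 + 1 + 1) → Fin 2 :=
  ![![1, 1, 1, 0, 0, 0], ![0, 0, 1, 1, 1, 0], ![1, 0, 0, 0, 1, 1], ![0, 1, 0, 1, 0, 1]]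

def g6Amp (lp lm : ℝ) : Fin 4 → ℂ :=
  ![-((lp : ℂ) / (Real.sqrt 2 : ℂ)), (lp : ℂ) / (Real.sqrt 2 : ℂ),
    (lm : ℂ) / (Real.sqrt 2 : ℂ), (lm : ℂ) / (Real.sqrt 2 : ℂ)]

theorem G6_eq_superposition (lp lm : ℝ) : G6 lp lm = superposition (g6Amp lp lm) g6Basis := by
  funext f
  simp [superposition_apply, Fin.sum_univ_four, G6, g6Amp, g6Basis, mul_add, mul_ite, neg_ite,
    add_assoc]
  -- the two sides now differ only in the `Decidable` instances of their `if`s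
  congr!

theorem ofReal_div_sqrt_two_mul_self (x : ℝ) :
    (x : ℂ) / (Real.sqrt 2 : ℂ) * ((x : ℂ) / (Real.sqrt 2 : ℂ)) = (x : ℂ) ^ 2 / 2 := by
  have h : ((Real.sqrt 2 : ℝ) : ℂ) ^ 2 = 2 := by norm_cast; simp
  rw [div_mul_div_comm, ← sq, ← sq, h]

theorem rhoA_G6 (lp lm : ℝ) : rhoA (G6 lp lm) = diagonal ![(lp : ℂ) ^ 2, (lm : ℂ) ^ 2] := by
  rw [G6_eq_superposition, rhoA_superposition _ _ (by decide)]
  congr 1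
  funext s
  fin_cases s <;>
    simp [Finset.sum_filter, Fin.sum_univ_four, g6Basis, g6Amp, ofReal_div_sqrt_two_mul_self]

theorem rhoA2_G6 (lp lm : ℝ) : rhoA2 (G6 lp lm) =
    diagonal (fun p : Fin 2 × Fin 2 => if p.2 = 0 then (lp : ℂ) ^ 2 / 2 else (lm : ℂ) ^ 2 / 2) := by
  rw [G6_eq_superposition, rhoA2_superposition _ _ (by decide)]
  congr 1
  funext s
  fin_cases s <;>
    simp [Finset.sum_filter, Fin.sum_univ_four, Fin.init, g6Basis, g6Amp,
      ofReal_div_sqrt_two_mul_self]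

theorem trace_diagonal_mul_self {n R : Type*} [Fintype n] [DecidableEq n] [CommSemiring R]
    (d : n → R) : (diagonal d * diagonal d).trace = ∑ i, d i ^ 2 := by
  simp [diagonal_mul_diagonal, trace_diagonal, sq]

theorem sqrt_two_mul_one_sub_pow_four_add_pow_four {a b : ℝ} (ha : 0 ≤ a) (hb : 0 ≤ b)
    (h : a ^ 2 + b ^ 2 = 1) : Real.sqrt (2 * (1 - (a ^ 4 + b ^ 4))) = 2 * a * b := by
  rw [show 2 * (1 - (a ^ 4 + b ^ 4)) = (2 * a * b) ^ 2 by
    linear_combination (-2 * (1 + a ^ 2 + b ^ 2)) * h]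
  exact Real.sqrt_sq (by positivity)

/-- for the six-qubit state `G`: (i) the reduced density matrix of
qubit 6 is `diag(λ₊², λ₋²)` with `Tr ρ_{A(1)}² = λ₊⁴ + λ₋⁴`; (ii) the reduced density
matrix of qubits 5,6 is `diag(λ₊²/2, λ₋²/2, λ₊²/2, λ₋²/2)` with
`Tr ρ_{A(2)}² = (λ₊⁴ + λ₋⁴)/2`; (iii) the modified concurrences
`C(δ) = √(2(1 − 2^{δ−1} Tr ρ_{A(δ)}²))` satisfy `C(1) = C(2) = √(2(1−λ₊⁴−λ₋⁴)) = 2λ₊λ₋`. -/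
theorem six_qubit_reduced_densities (lp lm : ℝ) (hlp : 0 ≤ lp) (hlm : 0 ≤ lm)
    (hnorm : lp ^ 2 + lm ^ 2 = 1) :
    rhoA (G6 lp lm) = Matrix.diagonal ![(lp : ℂ) ^ 2, (lm : ℂ) ^ 2] ∧
    (rhoA (G6 lp lm) * rhoA (G6 lp lm)).trace = (lp : ℂ) ^ 4 + (lm : ℂ) ^ 4 ∧
    rhoA2 (G6 lp lm) =
      Matrix.diagonal (fun p : Fin 2 × Fin 2 =>
        if p.2 = 0 then (lp : ℂ) ^ 2 / 2 else (lm : ℂ) ^ 2 / 2) ∧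
    (rhoA2 (G6 lp lm) * rhoA2 (G6 lp lm)).trace = ((lp : ℂ) ^ 4 + (lm : ℂ) ^ 4) / 2 ∧
    Real.sqrt (2 * (1 - ((rhoA (G6 lp lm) * rhoA (G6 lp lm)).trace).re)) = 2 * lp * lm ∧
    Real.sqrt (2 * (1 - 2 * ((rhoA2 (G6 lp lm) * rhoA2 (G6 lp lm)).trace).re)) =
      2 * lp * lm ∧
    2 * lp * lm = Real.sqrt (2 * (1 - lp ^ 4 - lm ^ 4)) := by
  have htr1 : (rhoA (G6 lp lm) * rhoA (G6 lp lm)).trace = (lp : ℂ) ^ 4 + (lm : ℂ) ^ 4 := by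
    rw [rhoA_G6, trace_diagonal_mul_self, Fin.sum_univ_two]
    simp [← pow_mul]
  have htr2 :
      (rhoA2 (G6 lp lm) * rhoA2 (G6 lp lm)).trace = ((lp : ℂ) ^ 4 + (lm : ℂ) ^ 4) / 2 := by
    rw [rhoA2_G6, trace_diagonal_mul_self, Fintype.sum_prod_type]
    simp only [Fin.sum_univ_two, ↓reduceIte, one_ne_zero]
    ring
  have hC := sqrt_two_mul_one_sub_pow_four_add_pow_four hlp hlm hnorm
  refine ⟨rhoA_G6 lp lm, htr1, rhoA2_G6 lp lm, htr2, ?_, ?_, ?_⟩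
  · rw [htr1]
    exact_mod_cast hC
  · rw [htr2,
      show ((lp : ℂ) ^ 4 + (lm : ℂ) ^ 4) / 2 = ((lp ^ 4 + lm ^ 4) / 2 : ℝ) by push_cast; rfl,
      Complex.ofReal_re, mul_div_cancel₀ _ two_ne_zero, hC]
  · rw [sub_sub, hC]
end
end

section
/- Let G = (1/2)(−|111000⟩ + |001110⟩ + |100011⟩ + |010101⟩) ∈ (ℂ²)^{⊗6} (the state with λ₊ = λ₋ = 1/√2, a ground state of the six-site Wen-Plaquette model). Then the reduced density matrix of qubit 6 equals (1/2)·I₂ with von Neumann entropy S_{A(1)} = −Tr(ρ_{A(1)} ln ρ_{A(1)}) = ln 2, and the reduced density matrix of qubits 5 and 6 equals (1/4)·I₄ with von Neumann entropy S_{A(2)} = 2 ln 2; in particular both modified concurrences C(δ) = √(2(1 − 2^{δ−1}·Tr ρ_{A(δ)}²)) equal 1, so the state is maximally entangled with respect to both bipartitions. -/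
open Matrix BigOperators

noncomputable section

/-! Each of the four basis states of `G` carries a different value of qubits 5,6 and a different
configuration of qubits 1–4. Tracing out qubits 1–4 therefore kills all coherences and leaves
`ρ_{A(2)}` diagonal with entries `|±1/2|² = 1/4`; tracing out qubit 5 as well gives `I₂/2`.
A maximally mixed state `I_d/d` has entropy `ln d` and purity `Tr ρ² = 1/d`, which gives the
entropies and makes both concurrences `√(2(1 - 1/2))` equal to `1`. -/

lemma Matrix.IsHermitian.eigenvalues_algebraMap {𝕜 d : Type*} [RCLike 𝕜] [Fintype d]
    [DecidableEq d] {c : ℝ} (h : (algebraMap ℝ (Matrix d d 𝕜) c).IsHermitian) (i : d) :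
    h.eigenvalues i = c := by
  have : Nonempty d := ⟨i⟩
  simpa [spectrum.scalar_eq] using h.eigenvalues_mem_spectrum_real i

section MaximallyMixed

variable {d : Type*} [Fintype d] [DecidableEq d] {ρ : Matrix d d ℂ}

lemma vonNeumannEntropy_eq_log_card (hρ : ρ = (Fintype.card d : ℂ)⁻¹ • 1) (h : ρ.IsHermitian) :
    vonNeumannEntropy ρ h = Real.log (Fintype.card d) := by
  rw [← Complex.ofReal_natCast, ← Complex.ofReal_inv, Complex.coe_smul,
    ← Algebra.algebraMap_eq_smul_one] at hρ
  subst hρ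
  simp only [vonNeumannEntropy, h.eigenvalues_algebraMap, Finset.sum_const, Finset.card_univ,
    nsmul_eq_mul, Real.log_inv]
  rcases eq_or_ne (Fintype.card d : ℝ) 0 with hd | hd
  · simp [hd]
  · field_simp

lemma trace_mul_self_eq_inv_card (hρ : ρ = (Fintype.card d : ℂ)⁻¹ • 1) :
    (ρ * ρ).trace = (Fintype.card d : ℂ)⁻¹ := by
  rw [hρ, smul_mul_smul_comm, one_mul, trace_smul, trace_one, smul_eq_mul]
  rcases eq_or_ne (Fintype.card d : ℂ) 0 with hd | hd
  · simp [hd]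
  · field_simp

end MaximallyMixed

lemma sum_indicator_mul_conj_indicator {ι κ : Type*} [Fintype ι] [DecidableEq ι] [DecidableEq κ]
    (c : κ → ℂ) {p : κ → ι} (hp : Function.Injective p) (s t : κ) :
    ∑ g, (c s * if g = p s then 1 else 0) * starRingEnd ℂ (c t * if g = p t then 1 else 0) =
      if s = t then (‖c s‖ : ℂ) ^ 2 else 0 := by
  simp only [mul_ite, mul_one, mul_zero, ite_mul, zero_mul, Finset.sum_ite_eq', Finset.mem_univ,
    if_true, hp.eq_iff]
  split_ifs with h <;> simp [h, Complex.mul_conj']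

lemma rhoA_eq_sum_rhoA2 (ψ : (Fin (4 + 1 + 1) → Fin 2) → ℂ) (s t : Fin 2) :
    rhoA ψ s t = ∑ r, rhoA2 ψ (r, s) (r, t) := by
  rw [rhoA, ← (Fin.snocEquiv fun _ => Fin 2).sum_comp, Fintype.sum_prod_type]
  rfl

lemma vecCons6_eq_snoc_snoc {α : Type*} (x₀ x₁ x₂ x₃ x₄ x₅ : α) :
    (![x₀, x₁, x₂, x₃, x₄, x₅] : Fin (4 + 1 + 1) → α) =
      Fin.snoc (Fin.snoc ![x₀, x₁, x₂, x₃] x₄) x₅ := by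
  ext i
  fin_cases i <;> rfl

-- `G = ∑ₛ groundAmp s • |groundEnv s⟩ ⊗ |s⟩`, with `s` the state of qubits 5,6.
def groundAmp (s : Fin 2 × Fin 2) : ℂ := if s = (0, 0) then -1 / 2 else 1 / 2

def groundEnv (s : Fin 2 × Fin 2) : Fin 4 → Fin 2 :=
  ![![![1, 1, 1, 0], ![0, 1, 0, 1]], ![![0, 0, 1, 1], ![1, 0, 0, 0]]] s.1 s.2

lemma groundEnv_injective : Function.Injective groundEnv := by decide

lemma G6_snoc_snoc (g : Fin 4 → Fin 2) (a b : Fin 2) :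
    G6 (Real.sqrt 2)⁻¹ (Real.sqrt 2)⁻¹ (Fin.snoc (Fin.snoc g a) b) =
      groundAmp (a, b) * if g = groundEnv (a, b) then 1 else 0 := by
  have hcoeff : ((Real.sqrt 2)⁻¹ : ℝ) / (Real.sqrt 2 : ℂ) = 1 / 2 := by
    rw [Complex.ofReal_inv, div_eq_mul_inv, ← mul_inv, ← Complex.ofReal_mul,
      Real.mul_self_sqrt zero_le_two]
    norm_num
  simp only [G6, hcoeff, vecCons6_eq_snoc_snoc, Fin.snoc_inj]
  fin_cases a <;> fin_cases b <;> simp [groundAmp, groundEnv, neg_ite, neg_div]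

lemma rhoA2_G6_s17 : rhoA2 (G6 (Real.sqrt 2)⁻¹ (Real.sqrt 2)⁻¹) =
    (1 / 4 : ℂ) • (1 : Matrix (Fin 2 × Fin 2) (Fin 2 × Fin 2) ℂ) := by
  ext s t
  have hamp : (‖groundAmp s‖ : ℂ) ^ 2 = 1 / 4 := by
    unfold groundAmp
    split_ifs <;> norm_num
  simp only [rhoA2, G6_snoc_snoc, sum_indicator_mul_conj_indicator _ groundEnv_injective, hamp]
  simp [Matrix.one_apply]

lemma rhoA_G6_s17 : rhoA (G6 (Real.sqrt 2)⁻¹ (Real.sqrt 2)⁻¹) =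
    (1 / 2 : ℂ) • (1 : Matrix (Fin 2) (Fin 2) ℂ) := by
  ext s t
  simp only [rhoA_eq_sum_rhoA2, rhoA2_G6_s17]
  norm_num [Matrix.one_apply]

/-- for the ground state `G = (1/2)(−|111000⟩+|001110⟩+|100011⟩+|010101⟩)`
of the six-site Wen-Plaquette model (i.e. `λ₊ = λ₋ = 1/√2`): the reduced density matrix
of qubit 6 is `I₂/2` with entropy `ln 2`, the reduced density matrix of qubits 5,6 is
`I₄/4` with entropy `2 ln 2`, and both modified concurrences
`C(δ) = √(2(1 − 2^{δ−1} Tr ρ_{A(δ)}²))` equal `1` (maximal entanglement). -/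
theorem six_qubit_ground_state_max_entangled :
    rhoA (G6 (Real.sqrt 2)⁻¹ (Real.sqrt 2)⁻¹) =
      (1 / 2 : ℂ) • (1 : Matrix (Fin 2) (Fin 2) ℂ) ∧
    (∀ h : (rhoA (G6 (Real.sqrt 2)⁻¹ (Real.sqrt 2)⁻¹)).IsHermitian,
      vonNeumannEntropy _ h = Real.log 2) ∧
    rhoA2 (G6 (Real.sqrt 2)⁻¹ (Real.sqrt 2)⁻¹) =
      (1 / 4 : ℂ) • (1 : Matrix (Fin 2 × Fin 2) (Fin 2 × Fin 2) ℂ) ∧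
    (∀ h : (rhoA2 (G6 (Real.sqrt 2)⁻¹ (Real.sqrt 2)⁻¹)).IsHermitian,
      vonNeumannEntropy _ h = 2 * Real.log 2) ∧
    Real.sqrt (2 * (1 - ((rhoA (G6 (Real.sqrt 2)⁻¹ (Real.sqrt 2)⁻¹) *
      rhoA (G6 (Real.sqrt 2)⁻¹ (Real.sqrt 2)⁻¹)).trace).re)) = 1 ∧
    Real.sqrt (2 * (1 - 2 * ((rhoA2 (G6 (Real.sqrt 2)⁻¹ (Real.sqrt 2)⁻¹) *
      rhoA2 (G6 (Real.sqrt 2)⁻¹ (Real.sqrt 2)⁻¹)).trace).re)) = 1 := by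
  set G := G6 (Real.sqrt 2)⁻¹ (Real.sqrt 2)⁻¹
  have hA : rhoA G = (Fintype.card (Fin 2) : ℂ)⁻¹ • 1 := by
    rw [rhoA_G6_s17]
    norm_num
  have hA2 : rhoA2 G = (Fintype.card (Fin 2 × Fin 2) : ℂ)⁻¹ • 1 := by
    rw [rhoA2_G6_s17]
    norm_num
  refine ⟨rhoA_G6_s17, fun h => ?_, rhoA2_G6_s17, fun h => ?_, ?_, ?_⟩
  · rw [vonNeumannEntropy_eq_log_card hA]
    norm_num
  · rw [vonNeumannEntropy_eq_log_card hA2, Fintype.card_prod, Fintype.card_fin, Nat.cast_mul,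
      Nat.cast_ofNat, Real.log_mul two_ne_zero two_ne_zero]
    ring
  · rw [trace_mul_self_eq_inv_card hA]
    norm_num
  · rw [trace_mul_self_eq_inv_card hA2]
    norm_num
end
end
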